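/- arXiv:1106.4853 — 11 statements merged into one kernel-verified Lean document; each statement's English description precedes it below -/
import Mathlib

section
/- Fix natural numbers n, m ≥ 1. Call an element u of the free magma FreeMagma (Fin n) 'position-labeled of degree n' if the left-to-right list of labels of its leaves is exactly [0, 1, …, n−1] (so u uses each label exactly once, in increasing order). For φ : Fin n → FreeMagma PUnit, let φ̂(u) ∈ FreeMagma PUnit denote the image of u under the magma homomorphism FreeMagma (Fin n) → FreeMagma PUnit induced by φ (i.e., the result of substituting φ(j) for the j-th leaf of u, for each j). Then: if u₁ and u₂ are position-labeled of degree n and φ₁, φ₂ : Fin n → FreeMagma PUnit satisfy length(φ₁(j)) = m and length(φ₂(j)) = m for all j ∈ Fin n, then φ̂₁(u₁) = φ̂₂(u₂) implies u₁ = u₂ and φ₁ = φ₂. -/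
/-- The left-to-right list of leaf labels of an element of the free magma. -/
def FreeMagma.leaves {α : Type*} : FreeMagma α → List α
  | FreeMagma.of a => [a]
  | FreeMagma.mul x y => x.leaves ++ y.leaves

/-- An element of `FreeMagma (Fin n)` is position-labeled of degree `n` if the left-to-right
list of labels of its leaves is exactly `[0, 1, …, n-1]`. -/
def FreeMagma.PositionLabeled {n : ℕ} (u : FreeMagma (Fin n)) : Prop :=
  u.leaves = List.finRange n

lemma FreeMagma.leaves_ne_nil {α : Type*} (u : FreeMagma α) : u.leaves ≠ [] := by
  induction u with
  | ih1 a => simp [FreeMagma.leaves]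
  | ih2 x y ihx ihy => simp [FreeMagma.leaves, ihx]

lemma length_lift {n m : ℕ} (φ : Fin n → FreeMagma PUnit)
    (hφ : ∀ j, (φ j).length = m) (u : FreeMagma (Fin n)) :
    (FreeMagma.lift φ u).length = m * u.leaves.length := by
  induction u with
  | ih1 a => simp [FreeMagma.leaves, hφ]
  | ih2 x y ihx ihy =>
    have e : (FreeMagma.lift φ (x * y)).length
        = (FreeMagma.lift φ x).length + (FreeMagma.lift φ y).length := rfl
    rw [e, ihx, ihy]
    simp [FreeMagma.leaves, Nat.mul_add]

lemma key {n m : ℕ} (hm : 1 ≤ m) (φ₁ φ₂ : Fin n → FreeMagma PUnit)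
    (hφ₁ : ∀ j, (φ₁ j).length = m) (hφ₂ : ∀ j, (φ₂ j).length = m) :
    ∀ u₁ u₂ : FreeMagma (Fin n), u₁.leaves = u₂.leaves →
      FreeMagma.lift φ₁ u₁ = FreeMagma.lift φ₂ u₂ →
      u₁ = u₂ ∧ ∀ j ∈ u₁.leaves, φ₁ j = φ₂ j := by
  intro u₁
  induction u₁ with
  | ih1 a =>
    intro u₂ hl h
    cases u₂ with
    | of b =>
      simp only [FreeMagma.leaves, List.cons.injEq] at hl
      obtain ⟨rfl, -⟩ := hl
      simp only [FreeMagma.lift_of] at h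
      exact ⟨rfl, by simp [FreeMagma.leaves, h]⟩
    | mul x y =>
      exfalso
      simp only [FreeMagma.leaves] at hl
      rcases List.exists_cons_of_ne_nil (FreeMagma.leaves_ne_nil x) with ⟨c, l, hc⟩
      rcases List.exists_cons_of_ne_nil (FreeMagma.leaves_ne_nil y) with ⟨d, l', hd⟩
      rw [hc, hd] at hl
      simp at hl
  | ih2 x y ihx ihy =>
    intro u₂ hl h
    cases u₂ with
    | of b =>
      exfalso
      simp only [FreeMagma.leaves] at hl
      rcases List.exists_cons_of_ne_nil (FreeMagma.leaves_ne_nil x) with ⟨c, l, hc⟩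
      rcases List.exists_cons_of_ne_nil (FreeMagma.leaves_ne_nil y) with ⟨d, l', hd⟩
      rw [hc, hd] at hl
      simp at hl
    | mul x' y' =>
      simp only [map_mul] at h
      have hx : FreeMagma.lift φ₁ x = FreeMagma.lift φ₂ x' := by
        injection h
      have hy : FreeMagma.lift φ₁ y = FreeMagma.lift φ₂ y' := by
        injection h
      have hlen : x.leaves.length = x'.leaves.length := by
        have := congrArg FreeMagma.length hx
        rw [length_lift φ₁ hφ₁, length_lift φ₂ hφ₂] at this
        exact Nat.eq_of_mul_eq_mul_left hm this
      simp only [FreeMagma.leaves] at hl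
      obtain ⟨hl1, hl2⟩ := List.append_inj hl hlen
      obtain ⟨e1, hj1⟩ := ihx x' hl1 hx
      obtain ⟨e2, hj2⟩ := ihy y' hl2 hy
      refine ⟨by rw [e1, e2]; rfl, ?_⟩
      intro j hj
      simp only [FreeMagma.leaves, List.mem_append] at hj
      rcases hj with hj | hj
      · exact hj1 j hj
      · exact hj2 j hj

theorem stmt0 (n m : ℕ) (hn : 1 ≤ n) (hm : 1 ≤ m)
    (u₁ u₂ : FreeMagma (Fin n))
    (hu₁ : u₁.PositionLabeled) (hu₂ : u₂.PositionLabeled)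
    (φ₁ φ₂ : Fin n → FreeMagma PUnit)
    (hφ₁ : ∀ j, (φ₁ j).length = m) (hφ₂ : ∀ j, (φ₂ j).length = m)
    (h : FreeMagma.lift φ₁ u₁ = FreeMagma.lift φ₂ u₂) :
    u₁ = u₂ ∧ φ₁ = φ₂ := by
  obtain ⟨e, hj⟩ := key hm φ₁ φ₂ hφ₁ hφ₂ u₁ u₂ (hu₁.trans hu₂.symm) h
  refine ⟨e, funext fun j => hj j ?_⟩
  rw [hu₁]
  exact List.mem_finRange j
end

section
/- Let k be a field and F(x) the free linear algebra on one generator x over k. For f, g ∈ F(x), let f∘g denote the image of f under the unique algebra homomorphism F(x) → F(x) sending x to g (substitution of g for x in f). If f ≠ 0 and g ≠ 0, then f∘g lies in the k-span of x if and only if both f and g lie in the k-span of x. -/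
open FreeNonUnitalNonAssocAlgebra

noncomputable section Stmt1Aux

namespace Stmt1Aux

/-- number of leaves of a free magma element -/
def len : FreeMagma PUnit → ℕ
  | .of _ => 1
  | .mul a b => len a + len b

@[simp] lemma len_of (u : PUnit) : len (.of u) = 1 := rfl

@[simp] lemma len_mul (a b : FreeMagma PUnit) : len (a * b) = len a + len b := rfl

lemma len_pos (w : FreeMagma PUnit) : 1 ≤ len w := by
  induction w with
  | ih1 u => simp
  | ih2 a b iha ihb => simp; omega

lemma len_eq_one {w : FreeMagma PUnit} (h : len w = 1) : w = FreeMagma.of PUnit.unit := by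
  cases w with
  | of u => rfl
  | mul a b => exfalso; have := len_pos a; have := len_pos b; simp at h; omega

lemma mul_inj {a b c d : FreeMagma PUnit} : a * b = c * d ↔ a = c ∧ b = d := by
  constructor
  · intro h
    exact ⟨by injection h, by injection h⟩
  · rintro ⟨rfl, rfl⟩; rfl

/-- substitution of a magma element for the generator -/
def sub (m : FreeMagma PUnit) : FreeMagma PUnit → FreeMagma PUnit :=
  FreeMagma.liftAux (fun _ => m)

@[simp] lemma sub_of (m : FreeMagma PUnit) (u : PUnit) : sub m (.of u) = m := rfl

@[simp] lemma sub_mul (m a b : FreeMagma PUnit) : sub m (a * b) = sub m a * sub m b := rfl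

lemma len_sub (m w : FreeMagma PUnit) : len (sub m w) = len w * len m := by
  induction w with
  | ih1 u => simp
  | ih2 a b iha ihb => simp [iha, ihb, add_mul]

variable {k : Type*} [Field k]

/-- evaluation of a magma element in the algebra, substituting `g` for the generator -/
def ev (g : MonoidAlgebra k (FreeMagma PUnit)) :
    FreeMagma PUnit → MonoidAlgebra k (FreeMagma PUnit) :=
  FreeMagma.liftAux (fun _ => g)

@[simp] lemma ev_of (g : MonoidAlgebra k (FreeMagma PUnit)) (u : PUnit) : ev g (.of u) = g := rfl

@[simp] lemma ev_mul (g : MonoidAlgebra k (FreeMagma PUnit)) (a b : FreeMagma PUnit) :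
    ev g (a * b) = ev g a * ev g b := rfl

lemma lift_eq (g f : MonoidAlgebra k (FreeMagma PUnit)) :
    lift k (fun _ : PUnit => g) f = f.coeff.sum fun w c => c • ev g w := rfl

lemma mul_apply_inj (p q : MonoidAlgebra k (FreeMagma PUnit)) (c d : FreeMagma PUnit) :
    (p * q).coeff (c * d) = p.coeff c * q.coeff d := by
  classical
  rw [MonoidAlgebra.coeff_mul]
  have inner : ∀ b₁ : k, (q.coeff.sum fun a₂ b₂ => if c * a₂ = c * d then b₁ * b₂ else 0)
      = b₁ * q.coeff d := by
    intro b₁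
    simp only [mul_inj, true_and]
    rw [Finsupp.sum_ite_eq' q.coeff d fun _ b₂ => b₁ * b₂]
    split_ifs with h
    · rfl
    · rw [Finsupp.notMem_support_iff.mp h, mul_zero]
  have outer : (p.coeff.sum fun a₁ b₁ => q.coeff.sum fun a₂ b₂ => if a₁ * a₂ = c * d then b₁ * b₂ else 0)
      = p.coeff.sum fun a₁ b₁ => if a₁ = c then b₁ * q.coeff d else 0 := by
    apply Finsupp.sum_congr
    intro a₁ _
    by_cases h : a₁ = c
    · subst h; rw [if_pos rfl, inner]
    · simp only [mul_inj, h, false_and, if_false]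
      simp [Finsupp.sum]
  rw [outer]
  have : (p.coeff.sum fun a₁ b₁ => if a₁ = c then b₁ * q.coeff d else 0)
      = if c ∈ p.coeff.support then p.coeff c * q.coeff d else 0 := by
    rw [← Finsupp.sum_ite_eq' p.coeff c fun _ b₁ => b₁ * q.coeff d]
  rw [this]
  split_ifs with h
  · rfl
  · rw [Finsupp.notMem_support_iff.mp h, zero_mul]

lemma len_le_of_mem_support_ev (g : MonoidAlgebra k (FreeMagma PUnit)) (D : ℕ)
    (hD : ∀ u ∈ g.coeff.support, len u ≤ D) :
    ∀ w : FreeMagma PUnit, ∀ s ∈ (ev g w).coeff.support, len s ≤ len w * D := by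
  intro w
  induction w with
  | ih1 u => intro s hs; simpa using hD s hs
  | ih2 a b iha ihb =>
    intro s hs
    rw [ev_mul] at hs
    classical
    obtain ⟨u, hu, v, hv, rfl⟩ := Finset.mem_mul.mp (MonoidAlgebra.support_coeff_mul_subset _ _ hs)
    have h1 := iha u hu
    have h2 := ihb v hv
    simp only [len_mul, add_mul]
    omega

lemma ev_apply_sub (g : MonoidAlgebra k (FreeMagma PUnit)) (M0 : FreeMagma PUnit)
    (hD : ∀ u ∈ g.coeff.support, len u ≤ len M0) :
    ∀ w0 w : FreeMagma PUnit, len w ≤ len w0 →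
      (ev g w).coeff (sub M0 w0) = if w = w0 then g.coeff M0 ^ len w else 0 := by
  intro w0
  induction w0 with
  | ih1 u0 =>
    intro w hw
    have hw1 : w = FreeMagma.of PUnit.unit :=
      len_eq_one (le_antisymm (by simpa using hw) (len_pos w))
    subst hw1
    simp [pow_one]
  | ih2 a0 b0 ih1 ih2 =>
    intro w hw
    cases w with
    | of u =>
      have hne : FreeMagma.of u ≠ a0 * b0 := fun h => by cases h
      rw [if_neg hne, ev_of]
      apply Finsupp.notMem_support_iff.mp
      intro hmem
      have h1 := hD _ hmem
      have h2 : len (sub M0 (a0 * b0)) = (len a0 + len b0) * len M0 := by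
        rw [len_sub]; simp
      have := len_pos a0
      have := len_pos b0
      have := len_pos M0
      nlinarith
    | mul a b =>
      simp only [FreeMagma.mul_eq]
      rw [ev_mul, sub_mul, mul_apply_inj]
      by_cases h1 : len a ≤ len a0
      · by_cases h2 : len b ≤ len b0
        · rw [ih1 a h1, ih2 b h2]
          by_cases ha : a = a0
          · by_cases hb : b = b0
            · subst ha; subst hb
              rw [if_pos rfl, if_pos rfl, if_pos rfl, len_mul, pow_add]
            · rw [if_pos ha, if_neg hb, if_neg (by simp [mul_inj, hb]), mul_zero]
          · rw [if_neg ha, zero_mul, if_neg (by simp [mul_inj, ha])]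
        · -- len b > len b0, so len a < len a0, first factor vanishes
          have hlt : len a < len a0 := by simp at hw; omega
          have hz : (ev g a).coeff (sub M0 a0) = 0 := by
            apply Finsupp.notMem_support_iff.mp
            intro hmem
            have := len_le_of_mem_support_ev g (len M0) hD a _ hmem
            rw [len_sub] at this
            have := len_pos M0
            nlinarith
          rw [hz, zero_mul, if_neg]
          intro h
          rw [mul_inj] at h
          exact h2 (h.2 ▸ le_rfl)
      · -- len a > len a0, so len b < len b0, second factor vanishes
        have hlt : len b < len b0 := by simp at hw; omega
        have hz : (ev g b).coeff (sub M0 b0) = 0 := by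
          apply Finsupp.notMem_support_iff.mp
          intro hmem
          have := len_le_of_mem_support_ev g (len M0) hD b _ hmem
          rw [len_sub] at this
          have := len_pos M0
          nlinarith
        rw [hz, mul_zero, if_neg]
        intro h
        rw [mul_inj] at h
        exact h1 (h.1 ▸ le_rfl)

lemma coeff_lift (f g : MonoidAlgebra k (FreeMagma PUnit)) (w0 M0 : FreeMagma PUnit)
    (hw0 : w0 ∈ f.coeff.support)
    (hmaxf : ∀ w ∈ f.coeff.support, len w ≤ len w0)
    (hmaxg : ∀ u ∈ g.coeff.support, len u ≤ len M0) :
    (lift k (fun _ : PUnit => g) f).coeff (sub M0 w0) = f.coeff w0 * g.coeff M0 ^ len w0 := by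
  classical
  rw [lift_eq, Finsupp.sum, MonoidAlgebra.coeff_sum, Finset.sum_apply']
  have : ∀ w ∈ f.coeff.support, (f.coeff w • ev g w).coeff (sub M0 w0)
      = if w = w0 then f.coeff w * g.coeff M0 ^ len w else 0 := by
    intro w hw
    rw [MonoidAlgebra.coeff_smul_apply, ev_apply_sub g M0 hmaxg w0 w (hmaxf w hw), smul_eq_mul]
    split_ifs <;> simp
  rw [Finset.sum_congr rfl this, Finset.sum_ite_eq' f.coeff.support w0
    (fun w => f.coeff w * g.coeff M0 ^ len w), if_pos hw0]

lemma mem_span_iff (p : MonoidAlgebra k (FreeMagma PUnit)) :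
    p ∈ Submodule.span k {of k PUnit.unit} ↔
      p.coeff = Finsupp.single (FreeMagma.of PUnit.unit) (p.coeff (FreeMagma.of PUnit.unit)) := by
  have hof : (of k PUnit.unit : MonoidAlgebra k (FreeMagma PUnit))
      = MonoidAlgebra.single (FreeMagma.of PUnit.unit) (1 : k) := rfl
  rw [Submodule.mem_span_singleton]
  constructor
  · rintro ⟨c, rfl⟩
    rw [hof, MonoidAlgebra.smul_single, smul_eq_mul, mul_one, MonoidAlgebra.coeff_single, Finsupp.single_eq_same]
  · intro h
    refine ⟨p.coeff (FreeMagma.of PUnit.unit), ?_⟩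
    rw [hof, MonoidAlgebra.smul_single, smul_eq_mul, mul_one, ← MonoidAlgebra.coeff_inj, MonoidAlgebra.coeff_single, ← h]

end Stmt1Aux

end Stmt1Aux

open Stmt1Aux in
theorem stmt1 (k : Type*) [Field k]
    (f g : FreeNonUnitalNonAssocAlgebra k PUnit) (hf : f ≠ 0) (hg : g ≠ 0) :
    lift k (fun _ : PUnit => g) f ∈
        Submodule.span k {of k PUnit.unit} ↔
      f ∈ Submodule.span k {of k PUnit.unit} ∧
        g ∈ Submodule.span k {of k PUnit.unit} := by
  classical
  constructor
  · intro h
    -- choose support elements of maximal length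
    obtain ⟨w0, hw0, hmaxf⟩ :=
      Finset.exists_max_image f.coeff.support len (Finsupp.support_nonempty_iff.mpr (MonoidAlgebra.coeff_eq_zero.not.mpr hf))
    obtain ⟨M0, hM0, hmaxg⟩ :=
      Finset.exists_max_image g.coeff.support len (Finsupp.support_nonempty_iff.mpr (MonoidAlgebra.coeff_eq_zero.not.mpr hg))
    have hcoeff := coeff_lift f g w0 M0 hw0 hmaxf hmaxg
    have hne : (lift k (fun _ : PUnit => g) f).coeff (sub M0 w0) ≠ 0 := by
      rw [hcoeff]
      exact mul_ne_zero (Finsupp.mem_support_iff.mp hw0)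
        (pow_ne_zero _ (Finsupp.mem_support_iff.mp hM0))
    have hx : sub M0 w0 = FreeMagma.of PUnit.unit := by
      rw [mem_span_iff] at h
      by_contra hne'
      apply hne
      rw [h]
      exact Finsupp.single_eq_of_ne (fun hh => hne' hh)
    have hlen : len w0 * len M0 = 1 := by
      rw [← len_sub, hx, len_of]
    obtain ⟨hw0len, hM0len⟩ := (mul_eq_one_iff_of_one_le (len_pos w0) (len_pos M0)).mp hlen
    constructor
    · rw [mem_span_iff, ← Finsupp.support_subset_singleton]
      intro w hw
      have := hmaxf w hw
      rw [hw0len] at this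
      rw [Finset.mem_singleton]
      exact len_eq_one (le_antisymm this (len_pos w))
    · rw [mem_span_iff, ← Finsupp.support_subset_singleton]
      intro u hu
      have := hmaxg u hu
      rw [hM0len] at this
      rw [Finset.mem_singleton]
      exact len_eq_one (le_antisymm this (len_pos u))
  · rintro ⟨hf', hg'⟩
    rw [Submodule.mem_span_singleton] at hf'
    obtain ⟨c, hc⟩ := hf'
    rw [← hc, map_smul, lift_of_apply]
    exact Submodule.smul_mem _ c hg'
end

section
/- Let k be a field, φ a field automorphism of k, and a, b ∈ k with a ≠ b and a ≠ −b. Then for every set X there exists a unique (φ,a,b)-twist map σ on F(X), and this σ is bijective. -/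
noncomputable section

open Finsupp MonoidAlgebra

/-- A `(φ,a,b)`-twist map on the free linear algebra `F(X)`: an additive, `φ`-semilinear map
satisfying `σ(f·g) = a•(σf·σg) + b•(σg·σf)` and fixing all generators. -/
def IsTwistMap (k : Type*) [Field k] {X : Type*} (φ : k ≃+* k) (a b : k)
    (σ : FreeNonUnitalNonAssocAlgebra k X → FreeNonUnitalNonAssocAlgebra k X) : Prop :=
  (∀ f g, σ (f + g) = σ f + σ g) ∧
  (∀ (l : k) (f), σ (l • f) = φ l • σ f) ∧
  (∀ f g, σ (f * g) = a • (σ f * σ g) + b • (σ g * σ f)) ∧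
  (∀ x : X, σ (FreeNonUnitalNonAssocAlgebra.of k x) = FreeNonUnitalNonAssocAlgebra.of k x)

namespace TwistAux

variable {k : Type*} [Field k] {X : Type*}

/-- recursive definition on magma elements -/
def tw (a b : k) : FreeMagma X → FreeNonUnitalNonAssocAlgebra k X
  | .of x => FreeNonUnitalNonAssocAlgebra.of k x
  | .mul m n => a • (tw a b m * tw a b n) + b • (tw a b n * tw a b m)

/-- the candidate twist map -/
def twmap (φ : k ≃+* k) (a b : k) (f : FreeNonUnitalNonAssocAlgebra k X) :
    FreeNonUnitalNonAssocAlgebra k X :=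
  f.coeff.sum fun m c => φ c • tw a b m

lemma twmap_single (φ : k ≃+* k) (a b : k) (m : FreeMagma X) (c : k) :
    twmap φ a b (MonoidAlgebra.single m c) = φ c • tw a b m := by
  simp [twmap, Finsupp.sum_single_index]

lemma twmap_add (φ : k ≃+* k) (a b : k) (f g : FreeNonUnitalNonAssocAlgebra k X) :
    twmap φ a b (f + g) = twmap φ a b f + twmap φ a b g := by
  rw [twmap, twmap, twmap, MonoidAlgebra.coeff_add, Finsupp.sum_add_index' (fun m => by simp)
    (fun m c d => by rw [map_add, add_smul])]

lemma twmap_smul (φ : k ≃+* k) (a b : k) (l : k) (f : FreeNonUnitalNonAssocAlgebra k X) :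
    twmap φ a b (l • f) = φ l • twmap φ a b f := by
  rw [twmap, twmap, MonoidAlgebra.coeff_smul, Finsupp.smul_sum, Finsupp.sum_smul_index' (by simp)]
  congr 1
  ext m c
  rw [smul_eq_mul, map_mul, mul_smul]

lemma twmap_zero (φ : k ≃+* k) (a b : k) :
    twmap φ a b (0 : FreeNonUnitalNonAssocAlgebra k X) = 0 := by
  simp [twmap]

lemma twmap_mul (φ : k ≃+* k) (a b : k) (f g : FreeNonUnitalNonAssocAlgebra k X) :
    twmap φ a b (f * g) =
      a • (twmap φ a b f * twmap φ a b g) + b • (twmap φ a b g * twmap φ a b f) := by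
  induction f using MonoidAlgebra.induction_linear with
  | zero => simp [twmap_zero]
  | add f₁ f₂ h₁ h₂ =>
      rw [add_mul, twmap_add, h₁, h₂, twmap_add, add_mul, mul_add, smul_add, smul_add]
      abel
  | single m c =>
      induction g using MonoidAlgebra.induction_linear with
      | zero => simp [twmap_zero]
      | add g₁ g₂ h₁ h₂ =>
          rw [mul_add, twmap_add, h₁, h₂, twmap_add, mul_add, add_mul, smul_add, smul_add]
          abel
      | single n d =>
          rw [MonoidAlgebra.single_mul_single, twmap_single, twmap_single, twmap_single]
          show φ (c * d) • tw a b (m * n) = _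
          show φ (c * d) • (a • (tw a b m * tw a b n) + b • (tw a b n * tw a b m)) = _
          rw [map_mul]
          simp only [smul_mul_assoc, mul_smul_comm, smul_add, smul_smul]
          match_scalars <;> ring

lemma of_eq_single (x : X) :
    FreeNonUnitalNonAssocAlgebra.of k x = MonoidAlgebra.single (FreeMagma.of x) (1 : k) := rfl

lemma twmap_isTwist (φ : k ≃+* k) (a b : k) :
    IsTwistMap (X := X) k φ a b (twmap φ a b) := by
  refine ⟨twmap_add φ a b, twmap_smul φ a b, twmap_mul φ a b, fun x => ?_⟩
  rw [of_eq_single, twmap_single, map_one, one_smul]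
  rfl

lemma twist_zero {φ : k ≃+* k} {a b : k}
    {σ : FreeNonUnitalNonAssocAlgebra k X → FreeNonUnitalNonAssocAlgebra k X}
    (h : IsTwistMap k φ a b σ) : σ 0 = 0 := by
  have := h.1 0 0
  rw [add_zero] at this
  exact add_eq_left.mp this.symm

lemma twist_unique {φ : k ≃+* k} {a b : k}
    {σ₁ σ₂ : FreeNonUnitalNonAssocAlgebra k X → FreeNonUnitalNonAssocAlgebra k X}
    (h₁ : IsTwistMap k φ a b σ₁) (h₂ : IsTwistMap k φ a b σ₂) : σ₁ = σ₂ := by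
  have z₁ := twist_zero h₁
  have z₂ := twist_zero h₂
  obtain ⟨add₁, smul₁, mul₁, of₁⟩ := h₁
  obtain ⟨add₂, smul₂, mul₂, of₂⟩ := h₂
  have key : ∀ m : FreeMagma X,
      σ₁ (MonoidAlgebra.single m (1 : k)) = σ₂ (MonoidAlgebra.single m (1 : k)) := by
    intro m
    induction m with
    | ih1 x =>
        rw [← of_eq_single, of₁, of₂]
    | ih2 m n ihm ihn =>
        have : (MonoidAlgebra.single (m * n) (1 : k) : FreeNonUnitalNonAssocAlgebra k X) =
            MonoidAlgebra.single m 1 * MonoidAlgebra.single n 1 := by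
          rw [MonoidAlgebra.single_mul_single, one_mul]
        rw [this, mul₁, mul₂, ihm, ihn]
  funext f
  induction f using MonoidAlgebra.induction_linear with
  | zero => rw [z₁, z₂]
  | add f g hf hg => rw [add₁, add₂, hf, hg]
  | single m c =>
      have : (MonoidAlgebra.single m c : FreeNonUnitalNonAssocAlgebra k X) =
          c • MonoidAlgebra.single m 1 := by
        rw [MonoidAlgebra.smul_single', mul_one]
      show σ₁ (MonoidAlgebra.single m c) = σ₂ (MonoidAlgebra.single m c)
      rw [this, smul₁, smul₂]
      exact congrArg _ (key m)

lemma twist_comp {φ ψ : k ≃+* k} {a b c d : k}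
    {σ σ' : FreeNonUnitalNonAssocAlgebra k X → FreeNonUnitalNonAssocAlgebra k X}
    (h : IsTwistMap k φ a b σ) (h' : IsTwistMap k ψ c d σ')
    (φ₀ : k ≃+* k) (a₀ b₀ : k) (hφ₀ : ∀ l, φ (ψ l) = φ₀ l)
    (ha₀ : a * φ c + b * φ d = a₀) (hb₀ : b * φ c + a * φ d = b₀) :
    IsTwistMap k φ₀ a₀ b₀ (σ ∘ σ') := by
  obtain ⟨add₁, smul₁, mul₁, of₁⟩ := h
  obtain ⟨add₂, smul₂, mul₂, of₂⟩ := h'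
  refine ⟨fun f g => by simp [add₂, add₁], fun l f => by simp [smul₂, smul₁, hφ₀],
    fun f g => ?_, fun x => by simp [of₂, of₁]⟩
  simp only [Function.comp_apply, mul₂, add₁, smul₁, mul₁]
  rw [← ha₀, ← hb₀]
  simp only [smul_add, smul_smul]
  match_scalars <;> ring

lemma twist_id : IsTwistMap (X := X) k (RingEquiv.refl k) 1 0 id :=
  ⟨fun _ _ => rfl, fun _ _ => rfl, fun f g => by simp, fun _ => rfl⟩

end TwistAux

open TwistAux in
theorem stmt3 (k : Type*) [Field k] (X : Type*) (φ : k ≃+* k) (a b : k)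
    (hab : a ≠ b) (hab' : a ≠ -b) :
    (∃! σ : FreeNonUnitalNonAssocAlgebra k X → FreeNonUnitalNonAssocAlgebra k X,
        IsTwistMap k φ a b σ) ∧
      (∀ σ : FreeNonUnitalNonAssocAlgebra k X → FreeNonUnitalNonAssocAlgebra k X,
        IsTwistMap k φ a b σ → Function.Bijective σ) := by
  have hD : a ^ 2 - b ^ 2 ≠ 0 := by
    intro h
    rcases mul_eq_zero.mp (by linear_combination h : (a - b) * (a + b) = 0) with h | h
    · exact hab (sub_eq_zero.mp h)
    · exact hab' (eq_neg_of_add_eq_zero_left h)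
  set D := a ^ 2 - b ^ 2 with hDdef
  refine ⟨⟨twmap φ a b, twmap_isTwist φ a b, fun σ h => twist_unique h (twmap_isTwist φ a b)⟩,
    fun σ h => ?_⟩
  set c := φ.symm (a / D) with hc
  set d := φ.symm (-b / D) with hd
  set σ' : FreeNonUnitalNonAssocAlgebra k X → FreeNonUnitalNonAssocAlgebra k X :=
    twmap φ.symm c d with hσ'
  have h' : IsTwistMap k φ.symm c d σ' := twmap_isTwist φ.symm c d
  have comp1 : IsTwistMap (X := X) k (RingEquiv.refl k) 1 0 (σ ∘ σ') := by
    refine twist_comp h h' _ _ _ (fun l => φ.apply_symm_apply l) ?_ ?_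
    · rw [hc, hd, φ.apply_symm_apply, φ.apply_symm_apply]; field_simp; ring
    · rw [hc, hd, φ.apply_symm_apply, φ.apply_symm_apply]; field_simp; ring
  have comp2 : IsTwistMap (X := X) k (RingEquiv.refl k) 1 0 (σ' ∘ σ) := by
    refine twist_comp h' h _ _ _ (fun l => φ.symm_apply_apply l) ?_ ?_
    · rw [hc, hd, ← map_mul, ← map_mul, ← map_add, ← map_one φ.symm]
      congr 1; field_simp; ring
    · rw [hc, hd, ← map_mul, ← map_mul, ← map_add, ← map_zero φ.symm]
      congr 1; field_simp; ring
  have e1 : σ ∘ σ' = id := twist_unique comp1 twist_id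
  have e2 : σ' ∘ σ = id := twist_unique comp2 twist_id
  exact Function.bijective_iff_has_inverse.mpr
    ⟨σ', fun f => congrFun e2 f, fun f => congrFun e1 f⟩
end
end

section
/- Let k be a field, X a nonempty set, φ a field automorphism of k, and a, b ∈ k with a = b or a = −b. Then there is no injective additive map σ : F(X) → F(X) satisfying σ(λ•f) = φ(λ)•σ(f) for all λ ∈ k and f ∈ F(X), σ(f·g) = a•(σ(f)·σ(g)) + b•(σ(g)·σ(f)) for all f, g ∈ F(X), and σ(of x) = of x for every x ∈ X. In other words, no injective (φ,a,b)-twist map exists when a = ±b. -/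
lemma freeMagma_not_assoc {X : Type*} (x : X) :
    (FreeMagma.of x * FreeMagma.of x) * FreeMagma.of x ≠
      FreeMagma.of x * (FreeMagma.of x * FreeMagma.of x) := by
  intro h
  injection h with h1 h2
  injection h1

lemma of_eq_single (k : Type*) [Field k] {X : Type*} (x : X) :
    (FreeNonUnitalNonAssocAlgebra.of k x : FreeNonUnitalNonAssocAlgebra k X)
      = MonoidAlgebra.single (FreeMagma.of x) 1 := rfl

theorem stmt4 (k : Type*) [Field k] (X : Type*) [Nonempty X] (φ : k ≃+* k) (a b : k)
    (hab : a = b ∨ a = -b) :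
    ¬ ∃ σ : FreeNonUnitalNonAssocAlgebra k X → FreeNonUnitalNonAssocAlgebra k X,
        Function.Injective σ ∧ IsTwistMap k φ a b σ := by
  rintro ⟨σ, hinj, hadd, hsmul, hmul, hof⟩
  obtain ⟨x⟩ := ‹Nonempty X›
  set e : FreeNonUnitalNonAssocAlgebra k X := FreeNonUnitalNonAssocAlgebra.of k x with he
  have hsingle : ∀ m : FreeMagma X,
      MonoidAlgebra.single m (1 : k) = MonoidAlgebra.single m 1 := fun _ => rfl
  have hee : e * e = MonoidAlgebra.single (FreeMagma.of x * FreeMagma.of x) (1 : k) := by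
    rw [he, of_eq_single, MonoidAlgebra.single_mul_single, one_mul]
  have hσe : σ e = e := hof x
  have hσee : σ (e * e) = (a + b) • (e * e) := by
    rw [hmul, hσe, add_smul]
  have h0 : σ 0 = 0 := by
    have := hadd 0 0
    rw [add_zero] at this
    exact left_eq_add.mp this
  by_cases hsum : a + b = 0
  · have : σ (e * e) = σ 0 := by rw [hσee, hsum, zero_smul, h0]
    have hee0 : e * e = 0 := hinj this
    rw [hee, hsingle, MonoidAlgebra.single_eq_zero] at hee0
    exact one_ne_zero hee0
  · have hab' : a = b := by
      rcases hab with h' | h'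
      · exact h'
      · exact absurd (by rw [h']; ring) hsum
    have key1 : σ (e * (e * e)) =
        (a * (a + b)) • (e * (e * e)) + (b * (a + b)) • ((e * e) * e) := by
      rw [hmul, hσe, hσee, mul_smul_comm, smul_mul_assoc, smul_smul, smul_smul,
        mul_comm a (a + b), mul_comm b (a + b)]
    have key2 : σ ((e * e) * e) =
        (a * (a + b)) • ((e * e) * e) + (b * (a + b)) • (e * (e * e)) := by
      rw [hmul, hσe, hσee, mul_smul_comm, smul_mul_assoc, smul_smul, smul_smul,
        mul_comm a (a + b), mul_comm b (a + b), add_comm]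
    have : σ (e * (e * e)) = σ ((e * e) * e) := by
      rw [key1, key2, hab', add_comm]
    have heq : e * (e * e) = (e * e) * e := hinj this
    rw [hee, he, of_eq_single, MonoidAlgebra.single_mul_single,
      MonoidAlgebra.single_mul_single, one_mul, hsingle, hsingle] at heq
    have := (MonoidAlgebra.single_left_injective (one_ne_zero (α := k))) heq
    exact freeMagma_not_assoc x this.symm
end

section
/- Let k be an infinite field and F = F({x₁, x₂}) the free linear algebra on two generators over k. For λ ∈ k let β_λ be the k-algebra endomorphism of F with β_λ(x₁) = λ•x₁, β_λ(x₂) = x₂, and let γ_λ be the one with γ_λ(x₁) = x₁, γ_λ(x₂) = λ•x₂. If w ∈ F satisfies β_λ(w) = λ•w and γ_λ(w) = λ•w for all λ ∈ k, then there exist a, b ∈ k with w = a•(x₁·x₂) + b•(x₂·x₁). -/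
open FreeNonUnitalNonAssocAlgebra

noncomputable section

def mdeg (i : Fin 2) : FreeMagma (Fin 2) → ℕ
  | .of j => if j = i then 1 else 0
  | .mul a b => mdeg i a + mdeg i b

@[simp] lemma mdeg_of (i j : Fin 2) : mdeg i (.of j) = if j = i then 1 else 0 := rfl
@[simp] lemma mdeg_mul (i : Fin 2) (a b : FreeMagma (Fin 2)) :
    mdeg i (a * b) = mdeg i a + mdeg i b := rfl
@[simp] lemma mdeg_mul' (i : Fin 2) (a b : FreeMagma (Fin 2)) :
    mdeg i (FreeMagma.mul a b) = mdeg i a + mdeg i b := rfl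

lemma of_eq_single_s6 (k : Type*) [Field k] (j : Fin 2) :
    of k j = MonoidAlgebra.single (FreeMagma.of j) (1 : k) := rfl

lemma single_mul (k : Type*) [Field k] (a b : FreeMagma (Fin 2)) :
    MonoidAlgebra.single (a * b) (1 : k) =
      MonoidAlgebra.single a (1 : k) * MonoidAlgebra.single b (1 : k) := by
  rw [MonoidAlgebra.single_mul_single, one_mul]

lemma lift_single_beta (k : Type*) [Field k] (l : k) (m : FreeMagma (Fin 2)) :
    lift k ![l • of k (0 : Fin 2), of k (1 : Fin 2)] (MonoidAlgebra.single m (1 : k))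
      = l ^ mdeg 0 m • MonoidAlgebra.single m (1 : k) := by
  induction m with
  | ih1 j =>
    fin_cases j <;> simp [← of_eq_single_s6, lift_of_apply]
  | ih2 a b ha hb =>
    rw [single_mul, map_mul, ha, hb, smul_mul_smul_comm, ← single_mul, ← pow_add]
    simp

end
noncomputable section
lemma coeff_beta (k : Type*) [Field k] (l : k) (w : FreeNonUnitalNonAssocAlgebra k (Fin 2))
    (m : FreeMagma (Fin 2)) :
    (lift k ![l • of k (0 : Fin 2), of k (1 : Fin 2)] w).coeff m = l ^ mdeg 0 m * w.coeff m := by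
  induction w using MonoidAlgebra.induction_linear with
  | zero => simp
  | add f g hf hg =>
    rw [map_add]
    show (_ + _ : MonoidAlgebra k (FreeMagma (Fin 2))).coeff m = _
    rw [MonoidAlgebra.coeff_add, Finsupp.add_apply, hf, hg, MonoidAlgebra.coeff_add,
      Finsupp.add_apply, mul_add]
  | single a b =>
    have : (MonoidAlgebra.single a b : MonoidAlgebra k (FreeMagma (Fin 2)))
        = b • MonoidAlgebra.single a (1 : k) := by simp
    rw [this, map_smul, lift_single_beta]
    rcases eq_or_ne a m with rfl | h
    · simp [mul_comm]
    · simp [MonoidAlgebra.coeff_single, Finsupp.single_apply, h]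
end
lemma mdeg_pos (m : FreeMagma (Fin 2)) : 1 ≤ mdeg 0 m + mdeg 1 m := by
  induction m with
  | ih1 j => fin_cases j <;> simp
  | ih2 a b ha hb => simp only [mdeg_mul]; omega

lemma classify (m : FreeMagma (Fin 2)) (h0 : mdeg 0 m = 1) (h1 : mdeg 1 m = 1) :
    m = FreeMagma.of 0 * FreeMagma.of 1 ∨ m = FreeMagma.of 1 * FreeMagma.of 0 := by
  have single_var : ∀ (i : Fin 2) (x : FreeMagma (Fin 2)), mdeg i x = 1 →
      mdeg (1 - i) x = 0 → x = FreeMagma.of i := by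
    intro i x
    induction x with
    | ih1 j =>
      fin_cases i <;> fin_cases j <;> simp
    | ih2 a b ha hb =>
      intro hx hy
      have pa := mdeg_pos a
      have pb := mdeg_pos b
      simp only [mdeg_mul] at hx hy
      exfalso
      fin_cases i <;> simp_all <;> omega
  cases m with
  | of j => fin_cases j <;> simp_all
  | mul a b =>
    simp only [mdeg_mul'] at h0 h1
    have pa := mdeg_pos a
    have pb := mdeg_pos b
    rcases Nat.le_one_iff_eq_zero_or_eq_one.mp (by omega : mdeg 0 a ≤ 1) with h | h
    · right
      have h1a : mdeg 1 a = 1 := by omega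
      have := single_var 1 a h1a (by simpa using by omega : mdeg (1 - 1) a = 0)
      have hb' := single_var 0 b (by omega) (by simpa using by omega : mdeg (1 - 0) b = 0)
      rw [this, hb']; rfl
    · left
      have := single_var 0 a h (by simpa using by omega : mdeg (1 - 0) a = 0)
      have hb' := single_var 1 b (by omega) (by simpa using by omega : mdeg (1 - 1) b = 0)
      rw [this, hb']; rfl

lemma pow_eq_self_nat (k : Type*) [Field k] [Infinite k] (n : ℕ) (h : ∀ l : k, l ^ n = l) :
    n = 1 := by
  by_contra hn
  have hp : (Polynomial.X ^ n - Polynomial.X : Polynomial k) = 0 := by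
    apply Polynomial.eq_zero_of_infinite_isRoot
    apply Set.infinite_coe_iff.mp
    refine Set.infinite_univ.mono ?_ |>.to_subtype
    intro x _
    simp [Polynomial.IsRoot, h x]
  have := congrArg (fun p => Polynomial.coeff p n) hp
  simp [Polynomial.coeff_X, Ne.symm hn] at this
noncomputable section
lemma lift_single_gamma (k : Type*) [Field k] (l : k) (m : FreeMagma (Fin 2)) :
    lift k ![of k (0 : Fin 2), l • of k (1 : Fin 2)] (MonoidAlgebra.single m (1 : k))
      = l ^ mdeg 1 m • MonoidAlgebra.single m (1 : k) := by
  induction m with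
  | ih1 j =>
    fin_cases j <;> simp [← of_eq_single_s6, lift_of_apply]
  | ih2 a b ha hb =>
    rw [single_mul, map_mul, ha, hb, smul_mul_smul_comm, ← single_mul, ← pow_add]
    simp

lemma coeff_gamma (k : Type*) [Field k] (l : k) (w : FreeNonUnitalNonAssocAlgebra k (Fin 2))
    (m : FreeMagma (Fin 2)) :
    (lift k ![of k (0 : Fin 2), l • of k (1 : Fin 2)] w).coeff m = l ^ mdeg 1 m * w.coeff m := by
  induction w using MonoidAlgebra.induction_linear with
  | zero => simp
  | add f g hf hg =>
    rw [map_add]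
    show (_ + _ : MonoidAlgebra k (FreeMagma (Fin 2))).coeff m = _
    rw [MonoidAlgebra.coeff_add, Finsupp.add_apply, hf, hg, MonoidAlgebra.coeff_add,
      Finsupp.add_apply, mul_add]
  | single a b =>
    have : (MonoidAlgebra.single a b : MonoidAlgebra k (FreeMagma (Fin 2)))
        = b • MonoidAlgebra.single a (1 : k) := by simp
    rw [this, map_smul, lift_single_gamma]
    rcases eq_or_ne a m with rfl | h
    · simp [mul_comm]
    · simp [MonoidAlgebra.coeff_single, Finsupp.single_apply, h]

theorem stmt6 (k : Type*) [Field k] [Infinite k]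
    (w : FreeNonUnitalNonAssocAlgebra k (Fin 2))
    (hβ : ∀ l : k, lift k ![l • of k (0 : Fin 2), of k (1 : Fin 2)] w = l • w)
    (hγ : ∀ l : k, lift k ![of k (0 : Fin 2), l • of k (1 : Fin 2)] w = l • w) :
    ∃ a b : k, w = a • (of k (0 : Fin 2) * of k (1 : Fin 2)) +
      b • (of k (1 : Fin 2) * of k (0 : Fin 2)) := by
  set m01 := FreeMagma.of (0 : Fin 2) * FreeMagma.of (1 : Fin 2) with hm01
  set m10 := FreeMagma.of (1 : Fin 2) * FreeMagma.of (0 : Fin 2) with hm10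
  have key : ∀ m : FreeMagma (Fin 2), w.coeff m ≠ 0 → m = m01 ∨ m = m10 := by
    intro m hm
    have d0 : mdeg 0 m = 1 := by
      apply pow_eq_self_nat k
      intro l
      have := congrArg (fun v : FreeNonUnitalNonAssocAlgebra k (Fin 2) => v.coeff m) (hβ l)
      simp only [coeff_beta, MonoidAlgebra.coeff_smul_apply, smul_eq_mul] at this
      exact mul_right_cancel₀ hm this
    have d1 : mdeg 1 m = 1 := by
      apply pow_eq_self_nat k
      intro l
      have := congrArg (fun v : FreeNonUnitalNonAssocAlgebra k (Fin 2) => v.coeff m) (hγ l)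
      simp only [coeff_gamma, MonoidAlgebra.coeff_smul_apply, smul_eq_mul] at this
      exact mul_right_cancel₀ hm this
    exact classify m d0 d1
  have e01 : of k (0 : Fin 2) * of k (1 : Fin 2) = MonoidAlgebra.single m01 (1 : k) := by
    rw [of_eq_single_s6, of_eq_single_s6, ← single_mul]
  have e10 : of k (1 : Fin 2) * of k (0 : Fin 2) = MonoidAlgebra.single m10 (1 : k) := by
    rw [of_eq_single_s6, of_eq_single_s6, ← single_mul]
  have hne : m01 ≠ m10 := by
    rw [hm01, hm10]
    intro h
    injection h with h1 h2
    injection h1 with h1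
    exact absurd h1 (by decide)
  refine ⟨w.coeff m01, w.coeff m10, ?_⟩
  rw [e01, e10]
  refine MonoidAlgebra.coeff_injective <| Finsupp.ext fun m => ?_
  rw [MonoidAlgebra.smul_single', MonoidAlgebra.smul_single', mul_one, mul_one]
  rw [MonoidAlgebra.coeff_add, Finsupp.add_apply, MonoidAlgebra.coeff_single,
    MonoidAlgebra.coeff_single]
  rcases eq_or_ne m m01 with rfl | h01
  · rw [Finsupp.single_eq_same, Finsupp.single_eq_of_ne hne, add_zero]
  rcases eq_or_ne m m10 with rfl | h10
  · rw [Finsupp.single_eq_same, Finsupp.single_eq_of_ne (Ne.symm hne), zero_add]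
  · rw [Finsupp.single_eq_of_ne h01, Finsupp.single_eq_of_ne h10,
      add_zero]
    by_contra hw
    rcases key m hw with rfl | rfl
    · exact h01 rfl
    · exact h10 rfl
end
end

section
/- Let k be a field, φ a field automorphism of k, a, b ∈ k with a ≠ b and a ≠ −b, and let σ be a (φ,a,b)-twist map on F(X). Then σ(F_n) = F_n for every n ≥ 1, where F_n is the k-subspace of F(X) of elements supported on monomials of degree exactly n. -/
/-- The `k`-subspace of the free linear algebra `F(X)` consisting of elements supported on
monomials of degree exactly `n`. -/
noncomputable def degreeComponent (k : Type*) [Field k] (X : Type*) (n : ℕ) :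
    Submodule k (FreeNonUnitalNonAssocAlgebra k X) :=
  MonoidAlgebra.supported k k {m : FreeMagma X | m.length = n}

section Aux

variable {k : Type*} [Field k] {X : Type*}

/-- The monomial `m` as an element of the free algebra. -/
noncomputable def mono (m : FreeMagma X) : FreeNonUnitalNonAssocAlgebra k X :=
  MonoidAlgebra.single m 1

theorem mem_degreeComponent_iff {n : ℕ} {f : FreeNonUnitalNonAssocAlgebra k X} :
    f ∈ degreeComponent k X n ↔ ∀ m ∈ f.coeff.support, FreeMagma.length m = n := by
  rw [degreeComponent, MonoidAlgebra.mem_supported]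
  exact Set.subset_def.symm ▸ Iff.rfl

theorem mono_mem_degreeComponent (m : FreeMagma X) :
    (mono m : FreeNonUnitalNonAssocAlgebra k X) ∈ degreeComponent k X m.length := by
  rw [mem_degreeComponent_iff]
  intro m' hm'
  have : m' ∈ ({m} : Finset (FreeMagma X)) := Finsupp.support_single_subset hm'
  rw [Finset.mem_singleton] at this
  subst this; rfl

theorem mul_mem_degreeComponent {p q : ℕ} {f g : FreeNonUnitalNonAssocAlgebra k X}
    (hf : f ∈ degreeComponent k X p) (hg : g ∈ degreeComponent k X q) :
    f * g ∈ degreeComponent k X (p + q) := by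
  classical
  rw [mem_degreeComponent_iff] at hf hg ⊢
  intro m hm
  have := MonoidAlgebra.support_coeff_mul_subset f g hm
  rw [Finset.mem_mul] at this
  obtain ⟨m1, hm1, m2, hm2, rfl⟩ := this
  rw [← hf m1 hm1, ← hg m2 hm2]
  rfl

theorem mono_mul_mono (m1 m2 : FreeMagma X) :
    (mono m1 : FreeNonUnitalNonAssocAlgebra k X) * mono m2 = mono (m1 * m2) := by
  unfold mono
  rw [MonoidAlgebra.single_mul_single, one_mul]

variable (φ : k ≃+* k) (a b : k)
  (σ : FreeNonUnitalNonAssocAlgebra k X → FreeNonUnitalNonAssocAlgebra k X)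

theorem twist_key (hab : a ≠ b) (hab' : a ≠ -b) (hσ : IsTwistMap k φ a b σ)
    (m : FreeMagma X) :
    σ (mono m) ∈ degreeComponent k X m.length ∧
      ∃ f ∈ degreeComponent k X m.length, σ f = mono m := by
  obtain ⟨hadd, hsmul, hmul, hof⟩ := hσ
  have hD : a ^ 2 - b ^ 2 ≠ 0 := by
    intro h
    rcases mul_eq_zero.mp (by linear_combination h : (a - b) * (a + b) = 0) with h' | h'
    · exact hab (sub_eq_zero.mp h')
    · exact hab' (eq_neg_of_add_eq_zero_left h')
  set c : k := φ.symm (a / (a ^ 2 - b ^ 2)) with hc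
  set d : k := φ.symm (-b / (a ^ 2 - b ^ 2)) with hd
  have hφc : φ c = a / (a ^ 2 - b ^ 2) := φ.apply_symm_apply _
  have hφd : φ d = -b / (a ^ 2 - b ^ 2) := φ.apply_symm_apply _
  have h1 : φ c * a + φ d * b = 1 := by
    rw [hφc, hφd]; field_simp; ring
  have h2 : φ c * b + φ d * a = 0 := by
    rw [hφc, hφd]; field_simp; ring
  induction m using FreeMagma.recOnMul with
  | ih1 x =>
    have hx : σ (mono (FreeMagma.of x)) = mono (FreeMagma.of x) := hof x
    exact ⟨by rw [hx]; exact mono_mem_degreeComponent _,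
      _, mono_mem_degreeComponent _, hx⟩
  | ih2 m1 m2 ihm1 ihm2 =>
    obtain ⟨hσ1, f1, hf1, hσf1⟩ := ihm1
    obtain ⟨hσ2, f2, hf2, hσf2⟩ := ihm2
    have hlen : (m1 * m2).length = m1.length + m2.length := rfl
    constructor
    · rw [← mono_mul_mono, hmul, hlen]
      exact add_mem (Submodule.smul_mem _ _ (mul_mem_degreeComponent hσ1 hσ2))
        (Submodule.smul_mem _ _ (Nat.add_comm m2.length m1.length ▸
          mul_mem_degreeComponent hσ2 hσ1))
    · refine ⟨c • (f1 * f2) + d • (f2 * f1), ?_, ?_⟩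
      · rw [hlen]
        exact add_mem (Submodule.smul_mem _ _ (mul_mem_degreeComponent hf1 hf2))
          (Submodule.smul_mem _ _ (Nat.add_comm m2.length m1.length ▸
            mul_mem_degreeComponent hf2 hf1))
      · rw [hadd, hsmul, hsmul, hmul, hmul, hσf1, hσf2,
          mono_mul_mono, mono_mul_mono]
        rw [smul_add, smul_add, smul_smul, smul_smul, smul_smul, smul_smul]
        calc (φ c * a) • (mono (m1 * m2) : FreeNonUnitalNonAssocAlgebra k X)
              + (φ c * b) • mono (m2 * m1)
              + ((φ d * a) • mono (m2 * m1) + (φ d * b) • mono (m1 * m2))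
            = (φ c * a + φ d * b) • (mono (m1 * m2) : FreeNonUnitalNonAssocAlgebra k X)
              + (φ c * b + φ d * a) • mono (m2 * m1) := by
              rw [add_smul, add_smul]; abel
          _ = mono (m1 * m2) := by
              rw [h1, h2, one_smul, zero_smul, add_zero]

end Aux

theorem stmt7 (k : Type*) [Field k] (X : Type*) (φ : k ≃+* k) (a b : k)
    (hab : a ≠ b) (hab' : a ≠ -b)
    (σ : FreeNonUnitalNonAssocAlgebra k X → FreeNonUnitalNonAssocAlgebra k X)
    (hσ : IsTwistMap k φ a b σ) (n : ℕ) (hn : 1 ≤ n) :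
    σ '' (degreeComponent k X n : Set (FreeNonUnitalNonAssocAlgebra k X)) =
      (degreeComponent k X n : Set (FreeNonUnitalNonAssocAlgebra k X)) := by
  obtain ⟨hadd, hsmul, hmul, hof⟩ := hσ
  have key := twist_key φ a b σ hab hab' ⟨hadd, hsmul, hmul, hof⟩
  let σ' : FreeNonUnitalNonAssocAlgebra k X →+ FreeNonUnitalNonAssocAlgebra k X :=
    AddMonoidHom.mk' σ hadd
  have hσ'_apply : ∀ f, σ' f = σ f := fun _ => rfl
  apply Set.Subset.antisymm
  · rintro _ ⟨f, hf, rfl⟩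
    have hrepr : f = ∑ m ∈ f.coeff.support, (f.coeff m) • mono m := by
      conv_lhs => rw [← MonoidAlgebra.sum_single f]
      rw [Finsupp.sum]
      refine Finset.sum_congr rfl fun m _ => ?_
      simp only [mono]
      rw [MonoidAlgebra.smul_single', mul_one]
    rw [hrepr, ← hσ'_apply, map_sum]
    apply Submodule.sum_mem
    intro m hm
    rw [hσ'_apply, hsmul]
    have hmn : m.length = n := (mem_degreeComponent_iff.mp hf) m hm
    exact Submodule.smul_mem _ _ (hmn ▸ (key m).1)
  · intro g hg
    choose F hF hσF using fun m => (key m).2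
    refine ⟨∑ m ∈ g.coeff.support, φ.symm (g.coeff m) • F m, ?_, ?_⟩
    · apply Submodule.sum_mem
      intro m hm
      have hmn : m.length = n := (mem_degreeComponent_iff.mp hg) m hm
      exact Submodule.smul_mem _ _ (hmn ▸ hF m)
    · rw [← hσ'_apply, map_sum]
      have step : ∀ m ∈ g.coeff.support, σ' (φ.symm (g.coeff m) • F m)
          = MonoidAlgebra.single m (g.coeff m) := by
        intro m _
        rw [hσ'_apply, hsmul, hσF m]
        unfold mono
        rw [MonoidAlgebra.smul_single', mul_one, φ.apply_symm_apply]
      rw [Finset.sum_congr rfl step]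
      conv_rhs => rw [← MonoidAlgebra.sum_single g]
      rfl
end

section
/- Let k be a field and X a set. Let φ₁, φ₂ be field automorphisms of k and a₁, b₁, a₂, b₂ ∈ k. If σ₁ is a (φ₁,a₁,b₁)-twist map on F(X) and σ₂ is a (φ₂,a₂,b₂)-twist map on F(X), then the composition σ₂ ∘ σ₁ is a (φ₂∘φ₁, φ₂(a₁)a₂ + φ₂(b₁)b₂, φ₂(a₁)b₂ + φ₂(b₁)a₂)-twist map on F(X). -/
theorem stmt12 (k : Type*) [Field k] (X : Type*)
    (φ₁ φ₂ : k ≃+* k) (a₁ b₁ a₂ b₂ : k)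
    (σ₁ σ₂ : FreeNonUnitalNonAssocAlgebra k X → FreeNonUnitalNonAssocAlgebra k X)
    (h₁ : IsTwistMap k φ₁ a₁ b₁ σ₁) (h₂ : IsTwistMap k φ₂ a₂ b₂ σ₂) :
    IsTwistMap k (φ₁.trans φ₂) (φ₂ a₁ * a₂ + φ₂ b₁ * b₂) (φ₂ a₁ * b₂ + φ₂ b₁ * a₂)
      (σ₂ ∘ σ₁) := by
  obtain ⟨add₁, smul₁, mul₁, of₁⟩ := h₁
  obtain ⟨add₂, smul₂, mul₂, of₂⟩ := h₂
  refine ⟨fun f g => by simp [add₁, add₂], fun l f => by simp [smul₁, smul₂],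
    fun f g => ?_, fun x => by simp [of₁, of₂]⟩
  simp only [Function.comp_apply, mul₁, add₂, smul₂, mul₂, smul_add, smul_smul]
  ring_nf
  module
end

section
/- Let k be a field, F = F({x₁, x₂}) the free linear algebra on two generators over k, φ a field automorphism of k, and a, b ∈ k with a ≠ b and a ≠ −b. There exists a bijective additive map c : F → F satisfying c(λ•f) = φ(λ)•c(f) for all λ ∈ k, f ∈ F, c(f·g) = a•(c(f)·c(g)) + b•(c(g)·c(f)) for all f, g ∈ F, and c ∘ α = α ∘ c for every k-algebra endomorphism α of F, if and only if φ is the identity automorphism of k and b = 0. -/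
open MonoidAlgebra
noncomputable section
namespace S14
variable {k : Type*} [Field k]
abbrev FF (k : Type*) [Field k] := FreeNonUnitalNonAssocAlgebra k (Fin 2)
abbrev M := FreeMagma (Fin 2)
def wx : M := FreeMagma.of 0
def wy : M := FreeMagma.of 1
instance : CoeFun (FF k) (fun _ => M → k) := ⟨fun f => f.coeff⟩

lemma mul_ne_of (u v : M) (i : Fin 2) : u * v ≠ FreeMagma.of i := by
  intro h; cases h

lemma mul_inj {u v u' v' : M} (h : u * v = u' * v') : u = u' ∧ v = v' := by
  injection h with h1 h2; exact ⟨h1, h2⟩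

lemma wx_ne_wy : wx ≠ wy := by
  intro h; injection h with h'; exact absurd h' (by decide)

lemma of_ne : (FreeMagma.of 1 : M) ≠ FreeMagma.of 0 := by
  intro h; injection h with h'; exact absurd h' (by decide)

lemma fsum_zero {N : Type*} [AddCommMonoid N] (g : M →₀ k) (F : M → k → N)
    (h : ∀ a b, F a b = 0) : g.sum F = 0 := by
  rw [Finsupp.sum]; exact Finset.sum_eq_zero fun a _ => h a (g a)

lemma sum_eq_at (g : M →₀ k) (v : M) (h : k → k) (h0 : h 0 = 0) :
    (g.sum fun a b => if a = v then h b else 0) = h (g v) := by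
  classical
  rw [Finsupp.sum, Finset.sum_eq_single v]
  · simp
  · intro b _ hb; rw [if_neg hb]
  · intro hv; rw [Finsupp.notMem_support_iff.mp hv, if_pos rfl, h0]

lemma apply_of_mul (f g : FF k) (i : Fin 2) : (f * g) (FreeMagma.of i) = 0 := by
  classical
  rw [MonoidAlgebra.mul_apply]
  refine fsum_zero _ _ fun a₁ b₁ => fsum_zero _ _ fun a₂ b₂ => ?_
  rw [if_neg (mul_ne_of a₁ a₂ i)]

lemma apply_mul_wx (f g : FF k) : (f * g) wx = 0 := apply_of_mul f g 0
lemma apply_mul_wy (f g : FF k) : (f * g) wy = 0 := apply_of_mul f g 1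

lemma apply_mul_mul (f g : FF k) (u v : M) : (f * g) (u * v) = f u * g v := by
  classical
  rw [MonoidAlgebra.mul_apply]
  have h1 : ∀ (a₁ : M) (b₁ : k),
      (g.coeff.sum fun a₂ b₂ => if a₁ * a₂ = u * v then b₁ * b₂ else 0)
        = if a₁ = u then b₁ * g v else 0 := by
    intro a₁ b₁
    by_cases h : a₁ = u
    · subst h
      rw [if_pos rfl]
      have : ∀ a₂ : M, (a₁ * a₂ = a₁ * v) = (a₂ = v) := by
        intro a₂
        apply propext
        constructor
        · intro h'; exact (mul_inj h').2
        · rintro rfl; rfl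
      simp_rw [this]
      exact sum_eq_at g.coeff v (fun b => b₁ * b) (mul_zero _)
    · rw [if_neg h]
      refine fsum_zero _ _ fun a₂ b₂ => ?_
      rw [if_neg]
      intro h'; exact h (mul_inj h').1
  simp_rw [h1]
  exact sum_eq_at f.coeff u (fun b => b * g v) (zero_mul _)

def Xg (k : Type*) [Field k] : FF k := FreeNonUnitalNonAssocAlgebra.of k 0
def Yg (k : Type*) [Field k] : FF k := FreeNonUnitalNonAssocAlgebra.of k 1

lemma Xg_eq : Xg k = MonoidAlgebra.single wx 1 := rfl
lemma Yg_eq : Yg k = MonoidAlgebra.single wy 1 := rfl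

lemma hom_single_of (A : FF k →ₙₐ[k] FF k) (i : Fin 2) (b : k) :
    A (MonoidAlgebra.single (FreeMagma.of i) b) = b • A (FreeNonUnitalNonAssocAlgebra.of k i) := by
  have h : (MonoidAlgebra.single (FreeMagma.of i) b : FF k)
      = b • FreeNonUnitalNonAssocAlgebra.of k i := by
    show _ = b • (MonoidAlgebra.single (FreeMagma.of i) 1 : FF k)
    rw [MonoidAlgebra.smul_single', mul_one]
  rw [h, map_smul]

lemma hom_single_mul (A : FF k →ₙₐ[k] FF k) (u v : M) (b : k) :
    A (MonoidAlgebra.single (u * v) b) = A (MonoidAlgebra.single u b) * A (MonoidAlgebra.single v 1) := by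
  have h : (MonoidAlgebra.single (u * v) b : FF k)
      = (MonoidAlgebra.single u b : FF k) * (MonoidAlgebra.single v 1 : FF k) := by
    rw [MonoidAlgebra.single_mul_single, mul_one]
  rw [h, map_mul]

/-- master extension: from singles to all elements -/
lemma hom_apply_all (A : FF k →ₙₐ[k] FF k) (w w' : M) (cc : k)
    (h : ∀ (u : M) (b : k), (A (MonoidAlgebra.single u b)) w = cc * (MonoidAlgebra.single u b : FF k) w') :
    ∀ g : FF k, (A g) w = cc * g w' := by
  have key : ∀ g : FF k, (A g) w = cc * g w' := by
    intro g
    induction g using MonoidAlgebra.induction with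
    | zero => rw [map_zero]; simp
    | single_add u b f hf hb ih =>
      rw [map_add]
      show (A (MonoidAlgebra.single u b)) w + (A f) w
          = cc * ((MonoidAlgebra.single u b : FF k) w' + f w')
      rw [h, ih, mul_add]
  exact key


def sw (k : Type*) [Field k] : FF k →ₙₐ[k] FF k :=
  FreeNonUnitalNonAssocAlgebra.lift k ![Yg k, Xg k]

lemma sw_X : sw k (Xg k) = Yg k := by simp [sw, Xg, Yg]

def ah (k : Type*) [Field k] : FF k →ₙₐ[k] FF k :=
  FreeNonUnitalNonAssocAlgebra.lift k ![Xg k * Yg k, Yg k]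

lemma ah_X : ah k (Xg k) = Xg k * Yg k := by simp [ah, Xg, Yg]

def rh (k : Type*) [Field k] (t : k) : FF k →ₙₐ[k] FF k :=
  FreeNonUnitalNonAssocAlgebra.lift k ![t • Xg k, Yg k]

lemma rh_X (t : k) : rh k t (Xg k) = t • Xg k := by simp [rh, Xg, Yg]

lemma of0_eq_Xg : (FreeNonUnitalNonAssocAlgebra.of k 0 : FF k) = Xg k := rfl
lemma of1_eq_Yg : (FreeNonUnitalNonAssocAlgebra.of k 1 : FF k) = Yg k := rfl

lemma sw_single : ∀ (w : M) (b : k),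
    ((sw k) (MonoidAlgebra.single w b)) wx = (MonoidAlgebra.single w b : FF k) wy ∧
    ((sw k) (MonoidAlgebra.single w b)) wy = (MonoidAlgebra.single w b : FF k) wx := by
  intro w
  induction w with
  | of i =>
    intro b
    rw [hom_single_of]
    fin_cases i <;> simp only [Fin.zero_eta, Fin.mk_one, Fin.isValue]
    · rw [of0_eq_Xg, sw_X, Yg_eq, MonoidAlgebra.smul_single']
      constructor <;> simp [wx, wy, Finsupp.single_apply, of_ne, of_ne.symm]
    · rw [of1_eq_Yg, show sw k (Yg k) = Xg k from by simp [sw, Xg, Yg], Xg_eq,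
        MonoidAlgebra.smul_single']
      constructor <;> simp [wx, wy, Finsupp.single_apply, of_ne, of_ne.symm]
  | mul u v ihu ihv =>
    intro b
    rw [show FreeMagma.mul u v = u * v from rfl, hom_single_mul]
    have h1 : u * v ≠ wy := mul_ne_of u v 1
    have h0 : u * v ≠ wx := mul_ne_of u v 0
    constructor
    · rw [apply_mul_wx, MonoidAlgebra.coeff_single, Finsupp.single_apply, if_neg h1]
    · rw [apply_mul_wy, MonoidAlgebra.coeff_single, Finsupp.single_apply, if_neg h0]


lemma XY_eq : (Xg k * Yg k : FF k) = MonoidAlgebra.single (wx * wy) 1 := by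
  rw [Xg_eq, Yg_eq]
  exact (MonoidAlgebra.single_mul_single ..).trans (by rw [one_mul])

lemma ah_single : ∀ (w : M) (b : k),
    ((ah k) (MonoidAlgebra.single w b)) wx = 0 ∧
    ((ah k) (MonoidAlgebra.single w b)) wy = (MonoidAlgebra.single w b : FF k) wy ∧
    ((ah k) (MonoidAlgebra.single w b)) (wx * wy) = (MonoidAlgebra.single w b : FF k) wx ∧
    ((ah k) (MonoidAlgebra.single w b)) (wy * wx) = 0 := by
  intro w
  have hxyx : wx * wy ≠ wx := mul_ne_of wx wy 0
  have hxyy : wx * wy ≠ wy := mul_ne_of wx wy 1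
  have hyxx : wy * wx ≠ wx := mul_ne_of wy wx 0
  have hxyyx : wx * wy ≠ wy * wx := fun h => wx_ne_wy (mul_inj h).1
  induction w with
  | of i =>
    intro b
    rw [hom_single_of]
    fin_cases i <;> simp only [Fin.zero_eta, Fin.mk_one, Fin.isValue]
    · rw [of0_eq_Xg, ah_X, XY_eq, MonoidAlgebra.smul_single', mul_one]
      refine ⟨?_, ?_, ?_, ?_⟩
      · rw [MonoidAlgebra.coeff_single, Finsupp.single_apply, if_neg hxyx]
      · rw [MonoidAlgebra.coeff_single, Finsupp.single_apply, if_neg hxyy]; simp [wx, wy, Finsupp.single_apply, of_ne, of_ne.symm]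
      · rw [MonoidAlgebra.coeff_single, Finsupp.single_eq_same]; simp [wx, Finsupp.single_apply]
      · rw [MonoidAlgebra.coeff_single, Finsupp.single_apply, if_neg hxyyx]
    · rw [of1_eq_Yg, show ah k (Yg k) = Yg k from by simp [ah, Xg, Yg], Yg_eq,
        MonoidAlgebra.smul_single', mul_one]
      have h1 : wy ≠ wx * wy := Ne.symm hxyy
      have h2 : wy ≠ wy * wx := Ne.symm (mul_ne_of wy wx 1)
      refine ⟨?_, ?_, ?_, ?_⟩
      · rw [MonoidAlgebra.coeff_single, Finsupp.single_apply, if_neg (Ne.symm wx_ne_wy)]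
      · rw [MonoidAlgebra.coeff_single, Finsupp.single_eq_same]; simp [wy, Finsupp.single_apply]
      · rw [MonoidAlgebra.coeff_single, MonoidAlgebra.coeff_single, Finsupp.single_apply, if_neg h1]; simp [wx, wy, Finsupp.single_apply, of_ne, of_ne.symm]
      · rw [MonoidAlgebra.coeff_single, Finsupp.single_apply, if_neg h2]
  | mul u v ihu ihv =>
    intro b
    rw [show FreeMagma.mul u v = u * v from rfl, hom_single_mul]
    have h1 : u * v ≠ wy := mul_ne_of u v 1
    have h0 : u * v ≠ wx := mul_ne_of u v 0
    refine ⟨?_, ?_, ?_, ?_⟩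
    · rw [apply_mul_wx]
    · rw [apply_mul_wy, MonoidAlgebra.coeff_single, Finsupp.single_apply, if_neg h1]
    · rw [apply_mul_mul, (ihu b).1, zero_mul, MonoidAlgebra.coeff_single, Finsupp.single_apply, if_neg h0]
    · rw [apply_mul_mul, (ihv 1).1, mul_zero]

lemma rh_single (t : k) : ∀ (w : M) (b : k),
    ((rh k t) (MonoidAlgebra.single w b)) wx = t * (MonoidAlgebra.single w b : FF k) wx := by
  intro w
  induction w with
  | of i =>
    intro b
    rw [hom_single_of]
    fin_cases i <;> simp only [Fin.zero_eta, Fin.mk_one, Fin.isValue]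
    · rw [of0_eq_Xg, rh_X, Xg_eq, MonoidAlgebra.smul_single', MonoidAlgebra.smul_single',
        MonoidAlgebra.coeff_single, Finsupp.single_eq_same]
      simp [wx, Finsupp.single_apply]
      ring
    · rw [of1_eq_Yg, show rh k t (Yg k) = Yg k from by simp [rh, Xg, Yg], Yg_eq,
        MonoidAlgebra.smul_single', mul_one, MonoidAlgebra.coeff_single, Finsupp.single_apply, if_neg (Ne.symm wx_ne_wy)]
      simp [wx, wy, Finsupp.single_apply, of_ne, of_ne.symm]
  | mul u v ihu ihv =>
    intro b
    have h0 : u * v ≠ wx := mul_ne_of u v 0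
    rw [show FreeMagma.mul u v = u * v from rfl, hom_single_mul, apply_mul_wx,
      MonoidAlgebra.coeff_single, Finsupp.single_apply, if_neg h0, mul_zero]

lemma sw_wx (g : FF k) : (sw k g) wx = g wy := by
  have h := hom_apply_all (sw k) wx wy 1
    (fun u b => by rw [one_mul]; exact (sw_single u b).1) g
  rwa [one_mul] at h

lemma sw_wy (g : FF k) : (sw k g) wy = g wx := by
  have h := hom_apply_all (sw k) wy wx 1
    (fun u b => by rw [one_mul]; exact (sw_single u b).2) g
  rwa [one_mul] at h

lemma ah_wx (g : FF k) : (ah k g) wx = 0 := by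
  have h := hom_apply_all (ah k) wx wx 0
    (fun u b => by rw [zero_mul]; exact (ah_single u b).1) g
  rwa [zero_mul] at h

lemma ah_wy (g : FF k) : (ah k g) wy = g wy := by
  have h := hom_apply_all (ah k) wy wy 1
    (fun u b => by rw [one_mul]; exact (ah_single u b).2.1) g
  rwa [one_mul] at h

lemma ah_xy (g : FF k) : (ah k g) (wx * wy) = g wx := by
  have h := hom_apply_all (ah k) (wx * wy) wx 1
    (fun u b => by rw [one_mul]; exact (ah_single u b).2.2.1) g
  rwa [one_mul] at h

lemma ah_yx (g : FF k) : (ah k g) (wy * wx) = 0 := by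
  have h := hom_apply_all (ah k) (wy * wx) wx 0
    (fun u b => by rw [zero_mul]; exact (ah_single u b).2.2.2) g
  rwa [zero_mul] at h

lemma rh_wx (t : k) (g : FF k) : (rh k t g) wx = t * g wx :=
  hom_apply_all (rh k t) wx wx t (rh_single t) g

example (u v : FF k) (aa bb : k) (w : M) :
    (aa • u + bb • v : FF k) w = aa * u w + bb * v w := rfl


lemma single_of_eq_smul (i : Fin 2) (b : k) :
    (MonoidAlgebra.single (FreeMagma.of i) b : FF k) = b • FreeNonUnitalNonAssocAlgebra.of k i := by
  show _ = b • (MonoidAlgebra.single (FreeMagma.of i) 1 : FF k)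
  rw [MonoidAlgebra.smul_single', mul_one]

lemma single_mul_eq (u v : M) (b : k) :
    (MonoidAlgebra.single (u * v) b : FF k)
      = (MonoidAlgebra.single u b : FF k) * (MonoidAlgebra.single v 1 : FF k) := by
  rw [MonoidAlgebra.single_mul_single, mul_one]

lemma Xg_wx : (Xg k) wx = 1 := by rw [Xg_eq, MonoidAlgebra.coeff_single, Finsupp.single_eq_same]

lemma Yg_wx : (Yg k) wx = 0 := by
  rw [Yg_eq, MonoidAlgebra.coeff_single, Finsupp.single_apply, if_neg (Ne.symm wx_ne_wy)]

end S14

theorem stmt14 (k : Type*) [Field k] (φ : k ≃+* k) (a b : k)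
    (hab : a ≠ b) (hab' : a ≠ -b) :
    (∃ c : FreeNonUnitalNonAssocAlgebra k (Fin 2) →
        FreeNonUnitalNonAssocAlgebra k (Fin 2),
      Function.Bijective c ∧
      (∀ f g, c (f + g) = c f + c g) ∧
      (∀ (l : k) (f), c (l • f) = φ l • c f) ∧
      (∀ f g, c (f * g) = a • (c f * c g) + b • (c g * c f)) ∧
      (∀ (α : FreeNonUnitalNonAssocAlgebra k (Fin 2) →ₙₐ[k]
          FreeNonUnitalNonAssocAlgebra k (Fin 2)) (f), c (α f) = α (c f))) ↔
    (φ = RingEquiv.refl k ∧ b = 0) := by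
  constructor
  · rintro ⟨c, hbij, hadd, hsmul, hmul, hcomm⟩
    have hc0 : c 0 = 0 := by
      have h := hadd 0 0
      rw [add_zero] at h
      exact (left_eq_add.mp h)
    have hY : c (S14.Yg k) = S14.sw k (c (S14.Xg k)) := by
      have h := hcomm (S14.sw k) (S14.Xg k)
      rw [S14.sw_X] at h
      exact h
    have hq : (c (S14.Yg k)) S14.wx = (c (S14.Xg k)) S14.wy := by rw [hY, S14.sw_wx]
    have hpY : (c (S14.Yg k)) S14.wy = (c (S14.Xg k)) S14.wx := by rw [hY, S14.sw_wy]
    have hE : a • (c (S14.Xg k) * c (S14.Yg k)) + b • (c (S14.Yg k) * c (S14.Xg k))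
        = S14.ah k (c (S14.Xg k)) := by
      have h1 := hcomm (S14.ah k) (S14.Xg k)
      rw [S14.ah_X] at h1
      exact (hmul (S14.Xg k) (S14.Yg k)).symm.trans h1
    have hq0 : (c (S14.Xg k)) S14.wy = 0 := by
      have h : (a • (c (S14.Xg k) * c (S14.Yg k)) + b • (c (S14.Yg k) * c (S14.Xg k))) S14.wy
          = (S14.ah k (c (S14.Xg k))) S14.wy := by rw [hE]
      rw [show (a • (c (S14.Xg k) * c (S14.Yg k)) + b • (c (S14.Yg k) * c (S14.Xg k))) S14.wy
          = a * ((c (S14.Xg k) * c (S14.Yg k)) S14.wy)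
            + b * ((c (S14.Yg k) * c (S14.Xg k)) S14.wy) from rfl,
        S14.apply_mul_wy, S14.apply_mul_wy, S14.ah_wy] at h
      simpa using h.symm
    have hbp : b * ((c (S14.Xg k)) S14.wx * (c (S14.Xg k)) S14.wx) = 0 := by
      have h : (a • (c (S14.Xg k) * c (S14.Yg k)) + b • (c (S14.Yg k) * c (S14.Xg k)))
            (S14.wy * S14.wx)
          = (S14.ah k (c (S14.Xg k))) (S14.wy * S14.wx) := by rw [hE]
      rw [show (a • (c (S14.Xg k) * c (S14.Yg k)) + b • (c (S14.Yg k) * c (S14.Xg k)))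
            (S14.wy * S14.wx)
          = a * ((c (S14.Xg k) * c (S14.Yg k)) (S14.wy * S14.wx))
            + b * ((c (S14.Yg k) * c (S14.Xg k)) (S14.wy * S14.wx)) from rfl,
        S14.apply_mul_mul, S14.apply_mul_mul, S14.ah_yx, hq, hq0, hpY] at h
      simpa using h
    have hS1 : ∀ f, (c f) S14.wx = φ (f S14.wx) * (c (S14.Xg k)) S14.wx := by
      have hsingle : ∀ (w : S14.M) (bb : k),
          (c (MonoidAlgebra.single w bb)) S14.wx
            = φ ((MonoidAlgebra.single w bb : S14.FF k) S14.wx) * (c (S14.Xg k)) S14.wx := by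
        intro w
        cases w with
        | of i =>
          intro bb
          rw [S14.single_of_eq_smul, hsmul]
          fin_cases i <;> simp only [Fin.zero_eta, Fin.mk_one, Fin.isValue]
          · rw [S14.of0_eq_Xg]
            rw [show (φ bb • c (S14.Xg k)) S14.wx = φ bb * ((c (S14.Xg k)) S14.wx) from rfl,
              show ((bb • S14.Xg k : S14.FF k) S14.wx) = bb * (S14.Xg k) S14.wx from rfl,
              S14.Xg_wx, mul_one]
          · rw [S14.of1_eq_Yg]
            rw [show (φ bb • c (S14.Yg k)) S14.wx = φ bb * ((c (S14.Yg k)) S14.wx) from rfl,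
              hq, hq0, mul_zero,
              show ((bb • S14.Yg k : S14.FF k) S14.wx) = bb * (S14.Yg k) S14.wx from rfl,
              S14.Yg_wx, mul_zero, map_zero, zero_mul]
        | mul u v =>
          intro bb
          have h0 : u * v ≠ S14.wx := S14.mul_ne_of u v 0
          rw [show FreeMagma.mul u v = u * v from rfl, S14.single_mul_eq, hmul]
          rw [show (a • (c (MonoidAlgebra.single u bb : S14.FF k)
                * c (MonoidAlgebra.single v 1 : S14.FF k))
              + b • (c (MonoidAlgebra.single v 1 : S14.FF k)
                * c (MonoidAlgebra.single u bb : S14.FF k))) S14.wx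
            = a * ((c (MonoidAlgebra.single u bb : S14.FF k)
                * c (MonoidAlgebra.single v 1 : S14.FF k)) S14.wx)
              + b * ((c (MonoidAlgebra.single v 1 : S14.FF k)
                * c (MonoidAlgebra.single u bb : S14.FF k)) S14.wx) from rfl,
            S14.apply_mul_wx, S14.apply_mul_wx, S14.apply_mul_wx, map_zero, zero_mul]
          simp
      have key : ∀ g : S14.FF k,
          (c g) S14.wx = φ (g S14.wx) * (c (S14.Xg k)) S14.wx := by
        intro g
        induction g using MonoidAlgebra.induction with
        | zero => rw [hc0]; simp
        | single_add u bb f hf hb ih =>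
          rw [hadd]
          rw [show (c (MonoidAlgebra.single u bb) + c (f : S14.FF k)) S14.wx
              = (c (MonoidAlgebra.single u bb)) S14.wx + (c (f : S14.FF k)) S14.wx from rfl]
          rw [hsingle u bb, ih]
          rw [show ((MonoidAlgebra.single u bb + f : S14.FF k)) S14.wx
              = (MonoidAlgebra.single u bb : S14.FF k) S14.wx + f S14.wx from rfl]
          rw [map_add, add_mul]
      exact key
    obtain ⟨f0, hf0⟩ := hbij.2 (S14.Xg k)
    have h1 : (1 : k) = φ (f0 S14.wx) * (c (S14.Xg k)) S14.wx := by
      have h := hS1 f0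
      rw [hf0, S14.Xg_wx] at h
      exact h
    have hpne : (c (S14.Xg k)) S14.wx ≠ 0 := by
      intro h
      rw [h, mul_zero] at h1
      exact one_ne_zero h1
    have hb0 : b = 0 := by
      rcases mul_eq_zero.mp hbp with h | h
      · exact h
      · exact absurd h (mul_ne_zero hpne hpne)
    have hφ : ∀ t, φ t = t := by
      intro t
      have h := hcomm (S14.rh k t) (S14.Xg k)
      rw [S14.rh_X] at h
      have h2 : (c (t • S14.Xg k)) S14.wx = (S14.rh k t (c (S14.Xg k))) S14.wx := by rw [h]
      rw [hsmul, S14.rh_wx] at h2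
      have h3 : φ t * (c (S14.Xg k)) S14.wx = t * (c (S14.Xg k)) S14.wx := h2
      exact mul_right_cancel₀ hpne h3
    exact ⟨RingEquiv.ext hφ, hb0⟩
  · rintro ⟨hφ, hb⟩
    subst hb
    subst hφ
    have ha : a ≠ 0 := by simpa using hab'
    refine ⟨fun f => a⁻¹ • f, ⟨?_, ?_⟩, ?_, ?_, ?_, ?_⟩
    · intro f g h
      have h2 := congrArg (fun z => a • z) h
      simpa [smul_smul, mul_inv_cancel₀ ha] using h2
    · intro f
      exact ⟨a • f, by show a⁻¹ • (a • f) = f; rw [smul_smul, inv_mul_cancel₀ ha, one_smul]⟩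
    · intro f g
      exact smul_add _ _ _
    · intro l f
      show a⁻¹ • (l • f) = l • (a⁻¹ • f)
      rw [smul_comm]
    · intro f g
      show a⁻¹ • (f * g) = a • ((a⁻¹ • f) * (a⁻¹ • g)) + (0 : k) • ((a⁻¹ • g) * (a⁻¹ • f))
      rw [zero_smul, add_zero, smul_mul_assoc, mul_smul_comm, smul_smul, smul_smul]
      congr 1
      field_simp
    · intro α f
      exact (map_smul α a⁻¹ f).symm
end
end

section
/- Let k be a field, F = F({x₁, x₂}) the free linear algebra on two generators over k, and I the smallest two-sided ideal of F (i.e., the smallest k-submodule of F closed under left and right multiplication by arbitrary elements of F) containing all elements of the form (f·f)·g with f, g ∈ F. Then x₂·(x₁·x₁) ∉ I. -/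
open FreeNonUnitalNonAssocAlgebra

/-- A 3-dimensional counterexample algebra: product
`(a₀,a₁,a₂)·(b₀,b₁,b₂) = (0, a₀b₀, a₀b₁)`. -/
def A3 (k : Type*) := k × k × k

section A3
variable (k : Type*) [Field k]

instance : AddCommGroup (A3 k) := inferInstanceAs (AddCommGroup (k × k × k))
instance : Module k (A3 k) := inferInstanceAs (Module k (k × k × k))

instance : Mul (A3 k) := ⟨fun a b => (0, a.1 * b.1, a.1 * b.2.1)⟩

lemma A3.mul_def (a b : A3 k) : a * b = ((0 : k), a.1 * b.1, a.1 * b.2.1) := rfl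

variable {k} in
@[simp] lemma A3.fst_mk (a b c : k) : ((a, b, c) : A3 k).1 = a := rfl
variable {k} in
@[simp] lemma A3.snd1_mk (a b c : k) : ((a, b, c) : A3 k).2.1 = b := rfl
variable {k} in
@[simp] lemma A3.snd2_mk (a b c : k) : ((a, b, c) : A3 k).2.2 = c := rfl
variable {k} in
@[simp] lemma A3.fst_add (a b : A3 k) : (a + b).1 = a.1 + b.1 := rfl
variable {k} in
@[simp] lemma A3.snd1_add (a b : A3 k) : (a + b).2.1 = a.2.1 + b.2.1 := rfl
variable {k} in
@[simp] lemma A3.snd2_add (a b : A3 k) : (a + b).2.2 = a.2.2 + b.2.2 := rfl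
variable {k} in
@[simp] lemma A3.fst_smul (c : k) (a : A3 k) : (c • a).1 = c * a.1 := rfl
variable {k} in
@[simp] lemma A3.snd1_smul (c : k) (a : A3 k) : (c • a).2.1 = c * a.2.1 := rfl
variable {k} in
@[simp] lemma A3.snd2_smul (c : k) (a : A3 k) : (c • a).2.2 = c * a.2.2 := rfl
variable {k} in
@[simp] lemma A3.fst_zero : ((0 : A3 k)).1 = 0 := rfl
variable {k} in
@[simp] lemma A3.snd1_zero : ((0 : A3 k)).2.1 = 0 := rfl
variable {k} in
@[simp] lemma A3.snd2_zero : ((0 : A3 k)).2.2 = 0 := rfl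

instance : NonUnitalNonAssocSemiring (A3 k) where
  left_distrib a b c := by
    show (a * (b + c) : A3 k) = a * b + a * c
    simp only [A3.mul_def]
    refine Prod.ext ?_ (Prod.ext ?_ ?_)
    · show (0:k) = 0 + 0; simp
    · show a.1 * (b.1 + c.1) = a.1 * b.1 + a.1 * c.1; ring
    · show a.1 * (b.2.1 + c.2.1) = a.1 * b.2.1 + a.1 * c.2.1; ring
  right_distrib a b c := by
    show ((a + b) * c : A3 k) = a * c + b * c
    simp only [A3.mul_def]
    refine Prod.ext ?_ (Prod.ext ?_ ?_)
    · show (0:k) = 0 + 0; simp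
    · show (a.1 + b.1) * c.1 = a.1 * c.1 + b.1 * c.1; ring
    · show (a.1 + b.1) * c.2.1 = a.1 * c.2.1 + b.1 * c.2.1; ring
  zero_mul a := by
    show ((0 : A3 k) * a : A3 k) = 0
    simp only [A3.mul_def]
    refine Prod.ext ?_ (Prod.ext ?_ ?_) <;> simp [show ((0 : A3 k)).1 = (0:k) from rfl]
  mul_zero a := by
    show (a * (0 : A3 k) : A3 k) = 0
    simp only [A3.mul_def]
    refine Prod.ext ?_ (Prod.ext ?_ ?_) <;>
      simp [show ((0 : A3 k)).1 = (0:k) from rfl, show ((0 : A3 k)).2.1 = (0:k) from rfl]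

instance : IsScalarTower k (A3 k) (A3 k) := by
  constructor
  intro c a b
  show ((c • a) * b : A3 k) = c • (a * b)
  simp only [A3.mul_def]
  refine Prod.ext ?_ (Prod.ext ?_ ?_)
  · show (0:k) = c * 0; simp
  · show (c * a.1) * b.1 = c * (a.1 * b.1); ring
  · show (c * a.1) * b.2.1 = c * (a.1 * b.2.1); ring

instance : SMulCommClass k (A3 k) (A3 k) := by
  constructor
  intro c a b
  show c • (a * b) = (a * (c • b) : A3 k)
  simp only [A3.mul_def]
  refine Prod.ext ?_ (Prod.ext ?_ ?_)
  · show c * 0 = (0:k); simp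
  · show c * (a.1 * b.1) = a.1 * (c * b.1); ring
  · show c * (a.1 * b.2.1) = a.1 * (c * b.2.1); ring

lemma A3.square_mul (a b : A3 k) : (a * a) * b = 0 := by
  simp only [A3.mul_def]
  refine Prod.ext ?_ (Prod.ext ?_ ?_)
  · show (0:k) = 0; rfl
  · show (0:k) * b.1 = 0; simp
  · show (0:k) * b.2.1 = 0; simp

end A3

/-- The smallest `k`-subspace of the free linear algebra on two generators that is closed under
left and right multiplication by arbitrary elements and contains all elements `(f·f)·g`:
the two-sided ideal of consequences of the identity `(x₁x₁)x₂ = 0`. -/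
noncomputable def idealI (k : Type*) [Field k] :
    Submodule k (FreeNonUnitalNonAssocAlgebra k (Fin 2)) :=
  sInf {J : Submodule k (FreeNonUnitalNonAssocAlgebra k (Fin 2)) |
    (∀ (f : FreeNonUnitalNonAssocAlgebra k (Fin 2)), ∀ g ∈ J, f * g ∈ J ∧ g * f ∈ J) ∧
    ∀ f g : FreeNonUnitalNonAssocAlgebra k (Fin 2), (f * f) * g ∈ J}

noncomputable def phi (k : Type*) [Field k] :
    FreeNonUnitalNonAssocAlgebra k (Fin 2) →ₙₐ[k] A3 k :=
  FreeNonUnitalNonAssocAlgebra.lift k (fun _ => ((1 : k), 0, 0))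

theorem stmt16 (k : Type*) [Field k] :
    of k (1 : Fin 2) * (of k (0 : Fin 2) * of k (0 : Fin 2)) ∉ idealI k := by
  intro h
  set J : Submodule k (FreeNonUnitalNonAssocAlgebra k (Fin 2)) :=
    LinearMap.ker (phi k : FreeNonUnitalNonAssocAlgebra k (Fin 2) →ₗ[k] A3 k) with hJ
  have hmem : J ∈ {J : Submodule k (FreeNonUnitalNonAssocAlgebra k (Fin 2)) |
      (∀ (f : FreeNonUnitalNonAssocAlgebra k (Fin 2)), ∀ g ∈ J, f * g ∈ J ∧ g * f ∈ J) ∧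
      ∀ f g : FreeNonUnitalNonAssocAlgebra k (Fin 2), (f * f) * g ∈ J} := by
    constructor
    · intro f g hg
      rw [hJ, LinearMap.mem_ker] at hg ⊢
      rw [LinearMap.mem_ker]
      constructor
      · show phi k (f * g) = 0
        rw [map_mul]
        show phi k f * phi k g = 0
        rw [show (phi k : FreeNonUnitalNonAssocAlgebra k (Fin 2) →ₗ[k] A3 k) g = phi k g from rfl] at hg
        rw [hg, mul_zero]
      · show phi k (g * f) = 0
        rw [map_mul]
        show phi k g * phi k f = 0
        rw [show (phi k : FreeNonUnitalNonAssocAlgebra k (Fin 2) →ₗ[k] A3 k) g = phi k g from rfl] at hg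
        rw [hg, zero_mul]
    · intro f g
      rw [hJ, LinearMap.mem_ker]
      show phi k (f * f * g) = 0
      rw [map_mul, map_mul]
      exact A3.square_mul k _ _
  have hle : idealI k ≤ J := sInf_le hmem
  have h2 := hle h
  rw [hJ, LinearMap.mem_ker] at h2
  have : phi k (of k (1 : Fin 2) * (of k (0 : Fin 2) * of k (0 : Fin 2))) = 0 := h2
  rw [map_mul, map_mul] at this
  have hof : ∀ i : Fin 2, phi k (of k i) = ((1 : k), 0, 0) := fun i =>
    FreeNonUnitalNonAssocAlgebra.lift_of_apply k _ i
  simp only [hof] at this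
  have h22 := congrArg (fun x : A3 k => x.2.2) this
  simp only [A3.mul_def, A3.fst_mk, A3.snd1_mk, A3.snd2_mk, A3.snd2_zero] at h22
  have : (1 : k) = 0 := by
    have h' : (1:k) * (1 * 1) = 0 := h22
    simpa using h'
  exact one_ne_zero this
end

section
/- Let k be a field, F = F({x₁, x₂}) the free linear algebra on two generators over k, and I the smallest two-sided ideal of F (i.e., the smallest k-submodule of F closed under left and right multiplication by arbitrary elements of F) containing all elements of the form (f·f)·g with f, g ∈ F. Then I ⊆ F^3, and every element of I is congruent modulo F^4 to a k-linear combination of the eight monomials (x_i·x_j)·x_k with i, j, k ∈ {1, 2}. -/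
open FreeNonUnitalNonAssocAlgebra

/-- The `k`-subspace `F^j` of the free linear algebra `F(X)` consisting of elements supported on
monomials of degree at least `j`. -/
noncomputable def degreeGE (k : Type*) [Field k] (X : Type*) (j : ℕ) :
    Submodule k (FreeNonUnitalNonAssocAlgebra k X) :=
  (Finsupp.supported k k {m : FreeMagma X | j ≤ m.length}).comap
    (MonoidAlgebra.coeffLinearEquiv (S := k) (M := FreeMagma X) k).toLinearMap

section Aux

variable {k : Type*} [Field k] {X : Type*}

lemma mem_degreeGE_iff {j : ℕ} (f : FreeNonUnitalNonAssocAlgebra k X) :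
    f ∈ degreeGE k X j ↔ ↑f.coeff.support ⊆ {m : FreeMagma X | j ≤ m.length} := Iff.rfl

lemma degreeGE_mono {j j' : ℕ} (h : j ≤ j') : degreeGE k X j' ≤ degreeGE k X j :=
  fun f hf => (mem_degreeGE_iff f).2 (((mem_degreeGE_iff f).1 hf).trans fun m hm => le_trans h hm)

lemma mem_degreeGE_one (f : FreeNonUnitalNonAssocAlgebra k X) : f ∈ degreeGE k X 1 := by
  rw [mem_degreeGE_iff]
  intro m _
  exact m.length_pos

lemma mul_mem_degreeGE {m n p : ℕ} (hp : m + n = p) {f g : FreeNonUnitalNonAssocAlgebra k X}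
    (hf : f ∈ degreeGE k X m) (hg : g ∈ degreeGE k X n) : f * g ∈ degreeGE k X p := by
  classical
  rw [mem_degreeGE_iff] at hf hg ⊢
  refine Set.Subset.trans (Finset.coe_subset.mpr (MonoidAlgebra.support_coeff_mul_subset f g)) ?_
  intro x hx
  rw [Finset.coe_mul] at hx
  obtain ⟨a, ha, b, hb, rfl⟩ := hx
  have ha' : m ≤ a.length := hf ha
  have hb' : n ≤ b.length := hg hb
  show p ≤ (a * b).length
  have : (a * b).length = a.length + b.length := rfl
  omega

lemma exists_linear_part (f : FreeNonUnitalNonAssocAlgebra k X) :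
    ∃ f₁ ∈ Submodule.span k (Set.range (of k : X → FreeNonUnitalNonAssocAlgebra k X)),
      f - f₁ ∈ degreeGE k X 2 := by
  classical
  induction f using MonoidAlgebra.induction with
  | zero => exact ⟨0, Submodule.zero_mem _, by simp [Submodule.zero_mem]⟩
  | single_add m b f hm hb ih =>
    obtain ⟨f₁, hf₁, hf₂⟩ := ih
    cases m with
    | of x =>
      refine ⟨b • of k x + f₁, ?_, ?_⟩
      · exact Submodule.add_mem _ (Submodule.smul_mem _ _
          (Submodule.subset_span ⟨x, rfl⟩)) hf₁
      · have hsingle : (b • of k x : FreeNonUnitalNonAssocAlgebra k X)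
            = MonoidAlgebra.single (FreeMagma.of x) b := by
          show b • MonoidAlgebra.single (FreeMagma.of x) (1 : k) = _
          rw [MonoidAlgebra.smul_single', mul_one]
        rw [hsingle]
        convert hf₂ using 1
        exact add_sub_add_left_eq_sub f f₁ _
    | mul a a' =>
      refine ⟨f₁, hf₁, ?_⟩
      have hs : MonoidAlgebra.single (FreeMagma.mul a a') b ∈ degreeGE k X 2 := by
        rw [mem_degreeGE_iff, MonoidAlgebra.coeff_single]
        refine Set.Subset.trans (Finset.coe_subset.mpr Finsupp.support_single_subset) ?_
        intro x hx
        simp only [Finset.coe_singleton, Set.mem_singleton_iff] at hx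
        subst hx
        show 2 ≤ (FreeMagma.mul a a').length
        have h1 := a.length_pos
        have h2 := a'.length_pos
        show 2 ≤ a.length + a'.length
        omega
      have := Submodule.add_mem _ hs hf₂
      convert this using 1
      exact add_sub_assoc _ _ _

end Aux

/-- The eight degree-3 monomials `(x_i x_j) x_l`. -/
noncomputable def triMon (k : Type*) [Field k] (p : Fin 2 × Fin 2 × Fin 2) :
    FreeNonUnitalNonAssocAlgebra k (Fin 2) :=
  (of k p.1 * of k p.2.1) * of k p.2.2

lemma tri_mem_span {k : Type*} [Field k]
    {x y z : FreeNonUnitalNonAssocAlgebra k (Fin 2)}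
    (hx : x ∈ Submodule.span k (Set.range (of k : Fin 2 → _)))
    (hy : y ∈ Submodule.span k (Set.range (of k : Fin 2 → _)))
    (hz : z ∈ Submodule.span k (Set.range (of k : Fin 2 → _))) :
    (x * y) * z ∈ Submodule.span k (Set.range (triMon k)) := by
  induction hx using Submodule.span_induction with
  | mem x hx =>
    induction hy using Submodule.span_induction with
    | mem y hy =>
      induction hz using Submodule.span_induction with
      | mem z hz =>
        obtain ⟨i, rfl⟩ := hx
        obtain ⟨j, rfl⟩ := hy
        obtain ⟨l, rfl⟩ := hz
        exact Submodule.subset_span ⟨(i, j, l), rfl⟩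
      | zero => simp [Submodule.zero_mem]
      | add z₁ z₂ _ _ h1 h2 => rw [mul_add]; exact Submodule.add_mem _ h1 h2
      | smul a z _ h => rw [mul_smul_comm]; exact Submodule.smul_mem _ _ h
    | zero => simp [Submodule.zero_mem]
    | add y₁ y₂ _ _ h1 h2 => rw [mul_add, add_mul]; exact Submodule.add_mem _ h1 h2
    | smul a y _ h => rw [mul_smul_comm, smul_mul_assoc]; exact Submodule.smul_mem _ _ h
  | zero => simp [Submodule.zero_mem]
  | add x₁ x₂ _ _ h1 h2 => rw [add_mul, add_mul]; exact Submodule.add_mem _ h1 h2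
  | smul a x _ h => rw [smul_mul_assoc, smul_mul_assoc]; exact Submodule.smul_mem _ _ h

theorem stmt17 (k : Type*) [Field k] :
    idealI k ≤ degreeGE k (Fin 2) 3 ∧
    ∀ w ∈ idealI k, ∃ c : Fin 2 → Fin 2 → Fin 2 → k,
      w - ∑ i : Fin 2, ∑ j : Fin 2, ∑ l : Fin 2,
          c i j l • ((of k i * of k j) * of k l) ∈ degreeGE k (Fin 2) 4 := by
  set S : Submodule k (FreeNonUnitalNonAssocAlgebra k (Fin 2)) :=
    Submodule.span k (Set.range (triMon k)) with hS
  set J : Submodule k (FreeNonUnitalNonAssocAlgebra k (Fin 2)) :=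
    degreeGE k (Fin 2) 3 ⊓ (S ⊔ degreeGE k (Fin 2) 4) with hJ
  have hIJ : idealI k ≤ J := by
    apply sInf_le
    constructor
    · intro f g hg
      have hg3 : g ∈ degreeGE k (Fin 2) 3 := hg.1
      have h4 : ∀ u : FreeNonUnitalNonAssocAlgebra k (Fin 2),
          u ∈ degreeGE k (Fin 2) 4 → u ∈ J := fun u hu =>
        ⟨degreeGE_mono (by norm_num) hu, Submodule.mem_sup_right hu⟩
      exact ⟨h4 _ (mul_mem_degreeGE (m := 1) (n := 3) (by norm_num) (mem_degreeGE_one f) hg3),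
        h4 _ (mul_mem_degreeGE (m := 3) (n := 1) (by norm_num) hg3 (mem_degreeGE_one f))⟩
    · intro f g
      obtain ⟨f₁, hf₁, hf₂⟩ := exists_linear_part f
      obtain ⟨g₁, hg₁, hg₂⟩ := exists_linear_part g
      refine ⟨mul_mem_degreeGE (m := 2) (n := 1) (by norm_num)
        (mul_mem_degreeGE (m := 1) (n := 1) (by norm_num) (mem_degreeGE_one f) (mem_degreeGE_one f))
        (mem_degreeGE_one g), ?_⟩
      have key : (f * f) * g - (f₁ * f₁) * g₁
          = (f₁ * f₁) * (g - g₁) + ((f - f₁) * f₁ + f * (f - f₁)) * g := by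
        simp only [mul_sub, sub_mul, add_mul]
        abel
      have hmem4 : (f * f) * g - (f₁ * f₁) * g₁ ∈ degreeGE k (Fin 2) 4 := by
        rw [key]
        refine Submodule.add_mem _ ?_ ?_
        · exact mul_mem_degreeGE (m := 2) (n := 2) (by norm_num)
            (mul_mem_degreeGE (m := 1) (n := 1) (by norm_num) (mem_degreeGE_one f₁) (mem_degreeGE_one f₁)) hg₂
        · refine mul_mem_degreeGE (m := 3) (n := 1) (by norm_num) ?_ (mem_degreeGE_one g)
          exact Submodule.add_mem _
            (mul_mem_degreeGE (m := 2) (n := 1) (by norm_num) hf₂ (mem_degreeGE_one f₁))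
            (mul_mem_degreeGE (m := 1) (n := 2) (by norm_num) (mem_degreeGE_one f) hf₂)
      have hspan : (f₁ * f₁) * g₁ ∈ S := tri_mem_span hf₁ hf₁ hg₁
      have : (f * f) * g = (f₁ * f₁) * g₁ + ((f * f) * g - (f₁ * f₁) * g₁) := by abel
      rw [this]
      exact Submodule.add_mem _ (Submodule.mem_sup_left hspan) (Submodule.mem_sup_right hmem4)
  constructor
  · exact le_trans hIJ inf_le_left
  · intro w hw
    have hw2 : w ∈ S ⊔ degreeGE k (Fin 2) 4 := (hIJ hw).2
    rw [Submodule.mem_sup] at hw2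
    obtain ⟨s, hs, h4, hh4, rfl⟩ := hw2
    rw [hS, Submodule.mem_span_range_iff_exists_fun] at hs
    obtain ⟨c', hc'⟩ := hs
    refine ⟨fun i j l => c' (i, j, l), ?_⟩
    have hsum : ∑ i : Fin 2, ∑ j : Fin 2, ∑ l : Fin 2,
        c' (i, j, l) • ((of k i * of k j) * of k l) = s := by
      rw [← hc', Fintype.sum_prod_type]
      refine Finset.sum_congr rfl fun i _ => ?_
      rw [Fintype.sum_prod_type]
      simp [triMon]
    rw [hsum]
    simpa using hh4
end

section
/- Let k be a field, φ a field automorphism of k, and a, b ∈ k with a ≠ b, a ≠ −b, and b ≠ 0. Let σ be a (φ,a,b)-twist map on F = F({x₁, x₂}), and let I be the smallest two-sided ideal of F (i.e., the smallest k-submodule of F closed under left and right multiplication by arbitrary elements of F) containing all elements of the form (f·f)·g with f, g ∈ F. Then σ(I) ≠ I. -/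
noncomputable section

/-- Auxiliary 4-dimensional algebra: basis x,y,s,t with x*x = s, y*s = t, all else 0. -/
def Aux (k : Type*) [Field k] : Type _ := Fin 4 → k

namespace Aux

variable (k : Type*) [Field k]

instance : AddCommGroup (Aux k) := inferInstanceAs (AddCommGroup (Fin 4 → k))
instance : Module k (Aux k) := inferInstanceAs (Module k (Fin 4 → k))

instance : Mul (Aux k) := ⟨fun f g => ![0, 0, f 0 * g 0, f 1 * g 2]⟩

variable {k}

lemma mul_def (f g : Aux k) : f * g = ![0, 0, f 0 * g 0, f 1 * g 2] := rfl

lemma add_apply (f g : Aux k) (i : Fin 4) : (f + g) i = f i + g i := rfl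
lemma smul_apply (c : k) (f : Aux k) (i : Fin 4) : (c • f) i = c * f i := rfl
lemma zero_apply (i : Fin 4) : (0 : Aux k) i = 0 := rfl

instance : NonUnitalNonAssocRing (Aux k) :=
  { (inferInstance : AddCommGroup (Aux k)), (inferInstance : Mul (Aux k)) with
    left_distrib := fun f g h => by
      funext i
      rw [add_apply]
      fin_cases i <;> simp [mul_def, add_apply, zero_apply] <;> ring
    right_distrib := fun f g h => by
      funext i
      rw [add_apply]
      fin_cases i <;> simp [mul_def, add_apply, zero_apply] <;> ring
    zero_mul := fun f => by
      funext i
      fin_cases i <;> simp [mul_def, zero_apply]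
    mul_zero := fun f => by
      funext i
      fin_cases i <;> simp [mul_def, zero_apply] }

instance : SMulCommClass k (Aux k) (Aux k) :=
  ⟨fun c f g => by
    show c • (f * g) = f * (c • g)
    funext i
    rw [smul_apply]
    fin_cases i <;> simp [mul_def, smul_apply, zero_apply] <;> ring⟩

instance : IsScalarTower k (Aux k) (Aux k) :=
  ⟨fun c f g => by
    show (c • f) * g = c • (f * g)
    funext i
    rw [smul_apply]
    fin_cases i <;> simp [mul_def, smul_apply, zero_apply] <;> ring⟩

lemma sq_mul (f g : Aux k) : (f * f) * g = 0 := by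
  funext i
  rw [mul_def, mul_def]
  fin_cases i <;> simp [mul_def, zero_apply]

variable (k)

/-- first generator -/
def XX : Aux k := ![1, 0, 0, 0]
/-- second generator -/
def YY : Aux k := ![0, 1, 0, 0]

end Aux

end

theorem stmt18 (k : Type*) [Field k] (φ : k ≃+* k) (a b : k)
    (hab : a ≠ b) (hab' : a ≠ -b) (hb : b ≠ 0)
    (σ : FreeNonUnitalNonAssocAlgebra k (Fin 2) → FreeNonUnitalNonAssocAlgebra k (Fin 2))
    (hσ : IsTwistMap k φ a b σ) :
    σ '' (idealI k : Set (FreeNonUnitalNonAssocAlgebra k (Fin 2))) ≠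
      (idealI k : Set (FreeNonUnitalNonAssocAlgebra k (Fin 2))) := by
  classical
  obtain ⟨hadd, hsmul, hmul, hof⟩ := hσ
  intro hEq
  -- the evaluation homomorphism into the auxiliary algebra
  set ψ : FreeNonUnitalNonAssocAlgebra k (Fin 2) →ₙₐ[k] Aux k :=
    FreeNonUnitalNonAssocAlgebra.lift k ![Aux.XX k, Aux.YY k] with hψ
  -- the kernel of ψ, as a submodule
  set J : Submodule k (FreeNonUnitalNonAssocAlgebra k (Fin 2)) :=
    { carrier := {f | ψ f = 0}
      add_mem' := fun {f} {g} hf hg => by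
        simp only [Set.mem_setOf_eq] at *
        rw [map_add, hf, hg, add_zero]
      zero_mem' := map_zero ψ
      smul_mem' := fun c f hf => by
        simp only [Set.mem_setOf_eq] at *
        rw [map_smul, hf, smul_zero] } with hJdef
  have hJmem : J ∈ {J : Submodule k (FreeNonUnitalNonAssocAlgebra k (Fin 2)) |
      (∀ (f : FreeNonUnitalNonAssocAlgebra k (Fin 2)), ∀ g ∈ J, f * g ∈ J ∧ g * f ∈ J) ∧
      ∀ f g : FreeNonUnitalNonAssocAlgebra k (Fin 2), (f * f) * g ∈ J} := by
    constructor
    · intro f g hg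
      have hg' : ψ g = 0 := hg
      constructor
      · show ψ (f * g) = 0
        rw [map_mul, hg', mul_zero]
      · show ψ (g * f) = 0
        rw [map_mul, hg', zero_mul]
    · intro f g
      show ψ ((f * f) * g) = 0
      rw [map_mul, map_mul]
      exact Aux.sq_mul _ _
  have hle : idealI k ≤ J := sInf_le hJmem
  -- the element m = (x₁x₁)x₂ is in the ideal
  set x₁ := FreeNonUnitalNonAssocAlgebra.of k (0 : Fin 2)
  set x₂ := FreeNonUnitalNonAssocAlgebra.of k (1 : Fin 2)
  set m := (x₁ * x₁) * x₂ with hm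
  have hmI : m ∈ idealI k := Submodule.mem_sInf.2 fun J' hJ' => hJ'.2 x₁ x₂
  -- hence σ m ∈ idealI k ≤ J, so ψ (σ m) = 0
  have hσm : σ m ∈ idealI k := by
    have : σ m ∈ σ '' (idealI k : Set (FreeNonUnitalNonAssocAlgebra k (Fin 2))) :=
      ⟨m, hmI, rfl⟩
    rwa [hEq] at this
  have hker : ψ (σ m) = 0 := hle hσm
  -- compute σ m explicitly
  have h1 : σ (x₁ * x₁) = (a + b) • (x₁ * x₁) := by
    rw [hmul, hof, add_smul]
  have h2 : σ m = a • (((a + b) • (x₁ * x₁)) * x₂) + b • (x₂ * ((a + b) • (x₁ * x₁))) := by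
    rw [hm, hmul, h1, hof]
  -- compute ψ (σ m)
  have hx₁ : ψ x₁ = Aux.XX k := by
    simp [hψ, x₁, FreeNonUnitalNonAssocAlgebra.lift_of_apply]
  have hx₂ : ψ x₂ = Aux.YY k := by
    simp [hψ, x₂, FreeNonUnitalNonAssocAlgebra.lift_of_apply]
  have h3 : ψ (σ m) = a • (((a + b) • (Aux.XX k * Aux.XX k)) * Aux.YY k)
      + b • (Aux.YY k * ((a + b) • (Aux.XX k * Aux.XX k))) := by
    rw [h2, map_add, map_smul, map_smul, map_mul, map_mul, map_smul, map_mul, hx₁, hx₂]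
  have h4 : ψ (σ m) 3 = b * (a + b) := by
    rw [h3]
    show a * ((a + b) * 0 * 0) + b * (1 * ((a + b) * (1 * 1))) = b * (a + b)
    ring
  rw [hker] at h4
  have hab0 : a + b ≠ 0 := fun h => hab' (eq_neg_of_add_eq_zero_left h)
  rw [Aux.zero_apply] at h4
  exact (mul_ne_zero hb hab0) h4.symm
end
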